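/- arXiv:math/0504361 — 3 statements merged into one kernel-verified Lean document; each statement's English description precedes it below -/
import Mathlib

section
/- For any noncrossing partition σ of {1,...,n}, the number of noncrossing linked partitions π of {1,...,n} whose generated noncrossing partition π̂ equals σ is the product over all blocks B of σ of c_{|B|-1}, where c_k is the Catalan number (c_0 = 1). -/
attribute [local instance] Classical.propDecidable

noncomputable section

/-- Two subsets `E`, `F` of `{1,...,n}` are crossing if there exist
`i₁ < j₁ < i₂ < j₂` with `i₁, i₂ ∈ E` and `j₁, j₂ ∈ F`. -/
def Crossing (E F : Finset ℕ) : Prop :=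
  ∃ i₁ ∈ E, ∃ i₂ ∈ E, ∃ j₁ ∈ F, ∃ j₂ ∈ F, i₁ < j₁ ∧ j₁ < i₂ ∧ i₂ < j₂

/-- `i` is the minimum element of `E`. -/
def IsMinOf (i : ℕ) (E : Finset ℕ) : Prop := i ∈ E ∧ ∀ j ∈ E, i ≤ j

/-- `E` and `F` are nearly disjoint. -/
def NearlyDisjoint (E F : Finset ℕ) : Prop :=
  ∀ i ∈ E ∩ F,
    (IsMinOf i E ∧ 1 < E.card ∧ ¬ IsMinOf i F) ∨
    (¬ IsMinOf i E ∧ IsMinOf i F ∧ 1 < F.card)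

/-- `π` is a noncrossing linked partition of `{1,...,n}`. -/
def IsNCL (n : ℕ) (π : Finset (Finset ℕ)) : Prop :=
  (∀ E ∈ π, E.Nonempty) ∧ π.biUnion id = Finset.Icc 1 n ∧
    ∀ E ∈ π, ∀ F ∈ π, E ≠ F → ¬ Crossing E F ∧ NearlyDisjoint E F

/-- `π` is a noncrossing partition of `{1,...,n}`. -/
def IsNC (n : ℕ) (π : Finset (Finset ℕ)) : Prop :=
  (∀ E ∈ π, E.Nonempty) ∧ π.biUnion id = Finset.Icc 1 n ∧
    ∀ E ∈ π, ∀ F ∈ π, E ≠ F → Disjoint E F ∧ ¬ Crossing E F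

/-- The order on (linked) partitions: every block of `π` is contained in a block of `σ`. -/
def NCLle (π σ : Finset (Finset ℕ)) : Prop := ∀ E ∈ π, ∃ E' ∈ σ, E ⊆ E'

/-- The finset of all noncrossing linked partitions of `{1,...,n}`. -/
def NCLset (n : ℕ) : Finset (Finset (Finset ℕ)) :=
  ((Finset.Icc 1 n).powerset.powerset).filter (IsNCL n)

/-- The finset of all noncrossing partitions of `{1,...,n}`. -/
def NCset (n : ℕ) : Finset (Finset (Finset ℕ)) :=
  ((Finset.Icc 1 n).powerset.powerset).filter (IsNC n)

/-- `σ` is the noncrossing partition generated by `π`: the smallest element of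
`NC(n)` lying above `π` in the containment order. -/
def GeneratesNC (n : ℕ) (π σ : Finset (Finset ℕ)) : Prop :=
  IsNC n σ ∧ NCLle π σ ∧ ∀ τ, IsNC n τ → NCLle π τ → NCLle σ τ



namespace NCL

open Finset

/-! ### Basic notions -/

def IsNCLOn (S : Finset ℕ) (π : Finset (Finset ℕ)) : Prop :=
  (∀ E ∈ π, E.Nonempty) ∧ π.biUnion id = S ∧
    ∀ E ∈ π, ∀ F ∈ π, E ≠ F → ¬ Crossing E F ∧ NearlyDisjoint E F

def IsNCOn (S : Finset ℕ) (π : Finset (Finset ℕ)) : Prop :=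
  (∀ E ∈ π, E.Nonempty) ∧ π.biUnion id = S ∧
    ∀ E ∈ π, ∀ F ∈ π, E ≠ F → Disjoint E F ∧ ¬ Crossing E F

lemma isNCL_eq (n : ℕ) : IsNCL n = IsNCLOn (Finset.Icc 1 n) := rfl
lemma isNC_eq (n : ℕ) : IsNC n = IsNCOn (Finset.Icc 1 n) := rfl

lemma crossing_mono {E E' F F' : Finset ℕ} (hE : E ⊆ E') (hF : F ⊆ F')
    (h : Crossing E F) : Crossing E' F' := by
  obtain ⟨i1, h1, i2, h2, j1, h3, j2, h4, h5⟩ := h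
  exact ⟨i1, hE h1, i2, hE h2, j1, hF h3, j2, hF h4, h5⟩

lemma not_crossing_singleton_left {x : ℕ} {F : Finset ℕ} : ¬ Crossing {x} F := by
  rintro ⟨i1, h1, i2, h2, j1, h3, j2, h4, l1, l2, l3⟩
  simp only [mem_singleton] at h1 h2
  omega

lemma not_crossing_singleton_right {E : Finset ℕ} {y : ℕ} : ¬ Crossing E {y} := by
  rintro ⟨i1, h1, i2, h2, j1, h3, j2, h4, l1, l2, l3⟩
  simp only [mem_singleton] at h3 h4
  omega

lemma isMinOf_min' {E : Finset ℕ} (h : E.Nonempty) : IsMinOf (E.min' h) E :=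
  ⟨E.min'_mem h, fun j hj => E.min'_le j hj⟩

lemma isMinOf_iff {E : Finset ℕ} (h : E.Nonempty) {i : ℕ} :
    IsMinOf i E ↔ i ∈ E ∧ i = E.min' h := by
  constructor
  · rintro ⟨hi, hle⟩
    exact ⟨hi, le_antisymm (hle _ (E.min'_mem h)) (E.min'_le i hi)⟩
  · rintro ⟨hi, heq⟩
    subst heq
    exact isMinOf_min' h

lemma not_isMinOf {E : Finset ℕ} (h : E.Nonempty) {i : ℕ} (hi : i ∈ E)
    (hne : i ≠ E.min' h) : ¬ IsMinOf i E := by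
  intro hmin
  exact hne ((isMinOf_iff h).mp hmin).2

lemma block_subset {S : Finset ℕ} {π : Finset (Finset ℕ)}
    (hU : π.biUnion id = S) {E} (hE : E ∈ π) : E ⊆ S := fun x hx => by
  rw [← hU]; exact mem_biUnion.mpr ⟨E, hE, hx⟩

lemma exists_block {S : Finset ℕ} {π : Finset (Finset ℕ)}
    (hU : π.biUnion id = S) {x} (hx : x ∈ S) : ∃ E ∈ π, x ∈ E := by
  rw [← hU] at hx
  simpa using mem_biUnion.mp hx

lemma mem_pp {S : Finset ℕ} {π : Finset (Finset ℕ)}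
    (hU : π.biUnion id = S) : π ∈ S.powerset.powerset :=
  mem_powerset.mpr fun E hE => mem_powerset.mpr (block_subset hU hE)

/-! ### The intersection graph of a linked partition -/

def Adj (π : Finset (Finset ℕ)) (E F : Finset ℕ) : Prop :=
  F ∈ π ∧ (E ∩ F).Nonempty

def Reaches (π : Finset (Finset ℕ)) (E F : Finset ℕ) : Prop :=
  Relation.ReflTransGen (Adj π) E F

lemma reaches_mem {π : Finset (Finset ℕ)} {E F : Finset ℕ} (hE : E ∈ π)
    (h : Reaches π E F) : F ∈ π := by
  induction h with
  | refl => exact hE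
  | tail _ step _ => exact step.1

lemma reaches_symm {π : Finset (Finset ℕ)} {E F : Finset ℕ} (hE : E ∈ π)
    (h : Reaches π E F) : Reaches π F E := by
  induction h with
  | refl => exact Relation.ReflTransGen.refl
  | tail h1 step ih =>
    have hb : _ ∈ π := reaches_mem hE h1
    have hin := step.2
    rw [Finset.inter_comm] at hin
    exact Relation.ReflTransGen.trans (Relation.ReflTransGen.single ⟨hb, hin⟩) ih

lemma reaches_trans {π : Finset (Finset ℕ)} {E F G : Finset ℕ}
    (h1 : Reaches π E F) (h2 : Reaches π F G) : Reaches π E G :=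
  Relation.ReflTransGen.trans h1 h2

/-- Trapping lemma: if every block satisfying `Q` which meets the open interval
`(a,b)` is contained in it, then this property propagates along chains. -/
lemma trapQ {π : Finset (Finset ℕ)} (Q : Finset ℕ → Prop) {a b : ℕ}
    (hQ : ∀ B C, B ∈ π → Q B → Adj π B C → Q C)
    (hH : ∀ B, B ∈ π → Q B → (∃ x ∈ B, a < x ∧ x < b) → ∀ y ∈ B, a < y ∧ y < b)
    {D1 D2 : Finset ℕ} (h1 : D1 ∈ π) (hQ1 : Q D1) (hr : Reaches π D1 D2)
    (hx : ∃ x ∈ D1, a < x ∧ x < b) : D2 ∈ π ∧ Q D2 ∧ ∀ y ∈ D2, a < y ∧ y < b := by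
  induction hr with
  | refl => exact ⟨h1, hQ1, hH _ h1 hQ1 hx⟩
  | tail h1' step ih =>
    obtain ⟨hm, hq, hb⟩ := ih
    have hqC := hQ _ _ hm hq step
    have hmC := step.1
    obtain ⟨x, hxi⟩ := step.2
    have hx1 := (mem_inter.mp hxi).1
    have hx2 := (mem_inter.mp hxi).2
    exact ⟨hmC, hqC, hH _ hmC hqC ⟨x, hx2, hb x hx1⟩⟩

/-- One connected family versus a single disjoint block: no crossing pattern. -/
lemma L1 {S : Finset ℕ} {π : Finset (Finset ℕ)} (hπ : IsNCLOn S π)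
    {G : Finset ℕ} (hG : G ∈ π) {F0 : Finset ℕ} (hF0 : F0 ∈ π)
    (hdisj : ∀ B, B ∈ π → Reaches π F0 B → B ∩ G = ∅)
    {g1 g2 u u' : ℕ} (hg1 : g1 ∈ G) (hg2 : g2 ∈ G)
    {Bu Bu' : Finset ℕ} (hBu : Bu ∈ π) (hru : Reaches π F0 Bu) (hu : u ∈ Bu)
    (hBu' : Bu' ∈ π) (hru' : Reaches π F0 Bu') (hu' : u' ∈ Bu')
    (h1 : g1 < u) (h2 : u < g2) (hout : u' < g1 ∨ g2 < u') : False := by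
  obtain ⟨hNE, hU, hPW⟩ := hπ
  have hH : ∀ B, B ∈ π → Reaches π F0 B → (∃ x ∈ B, g1 < x ∧ x < g2) →
      ∀ y ∈ B, g1 < y ∧ y < g2 := by
    intro B hB hQB hxB y hy
    obtain ⟨x, hx, hx1, hx2⟩ := hxB
    by_contra hyc
    have hBG : B ∩ G = ∅ := hdisj B hB hQB
    have hBne : B ≠ G := by
      intro h
      subst h
      have : x ∈ B ∩ B := mem_inter.mpr ⟨hx, hx⟩
      rw [hBG] at this
      exact absurd this (notMem_empty x)
    have hyG1 : y ≠ g1 := by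
      intro h; subst h
      have : y ∈ B ∩ G := mem_inter.mpr ⟨hy, hg1⟩
      rw [hBG] at this; exact absurd this (notMem_empty y)
    have hyG2 : y ≠ g2 := by
      intro h; subst h
      have : y ∈ B ∩ G := mem_inter.mpr ⟨hy, hg2⟩
      rw [hBG] at this; exact absurd this (notMem_empty y)
    rcases Nat.lt_or_ge y g1 with hlt | hge
    · exact (hPW B hB G hG hBne).1 ⟨y, hy, x, hx, g1, hg1, g2, hg2, hlt, hx1, hx2⟩
    · have hgt : g2 < y := by omega
      exact (hPW G hG B hB (Ne.symm hBne)).1 ⟨g1, hg1, g2, hg2, x, hx, y, hy, hx1, hx2, hgt⟩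
  have hQstep : ∀ B C, B ∈ π → Reaches π F0 B → Adj π B C → Reaches π F0 C :=
    fun B C _ hr hadj => Relation.ReflTransGen.tail hr hadj
  have hr2 : Reaches π Bu Bu' := reaches_trans (reaches_symm hF0 hru) hru'
  have := (trapQ (Reaches π F0) hQstep hH hBu hru hr2 ⟨u, hu, h1, h2⟩).2.2 u' hu'
  omega

def compU (π : Finset (Finset ℕ)) (E : Finset ℕ) : Finset ℕ :=
  (π.filter (fun B => Reaches π E B)).biUnion id

lemma mem_compU {π : Finset (Finset ℕ)} {E : Finset ℕ} {x : ℕ} :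
    x ∈ compU π E ↔ ∃ B, B ∈ π ∧ Reaches π E B ∧ x ∈ B := by
  simp only [compU, mem_biUnion, mem_filter, id]
  tauto

lemma subset_compU {π : Finset (Finset ℕ)} {E : Finset ℕ} (hE : E ∈ π) :
    E ⊆ compU π E := fun x hx =>
  mem_compU.mpr ⟨E, hE, Relation.ReflTransGen.refl, hx⟩

lemma compU_eq_of_reaches {π : Finset (Finset ℕ)} {E F : Finset ℕ} (hE : E ∈ π)
    (h : Reaches π E F) : compU π E = compU π F := by
  ext x
  simp only [mem_compU]
  constructor
  · rintro ⟨B, hB, hr, hx⟩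
    exact ⟨B, hB, reaches_trans (reaches_symm hE h) hr, hx⟩
  · rintro ⟨B, hB, hr, hx⟩
    exact ⟨B, hB, reaches_trans h hr, hx⟩

lemma comp_sep {π : Finset (Finset ℕ)} {E F : Finset ℕ} (hE : E ∈ π) (hF : F ∈ π)
    (hsep : ¬ Reaches π E F) {B C : Finset ℕ} (hB : B ∈ π) (hrB : Reaches π E B)
    (hrC : Reaches π F C) : B ∩ C = ∅ := by
  by_contra h
  have hne : (B ∩ C).Nonempty := nonempty_iff_ne_empty.mpr h
  have : Reaches π E C := Relation.ReflTransGen.tail hrB ⟨reaches_mem hF hrC, hne⟩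
  exact hsep (reaches_trans this (reaches_symm hF hrC))

lemma comp_noncross {S : Finset ℕ} {π : Finset (Finset ℕ)} (hπ : IsNCLOn S π)
    {E F : Finset ℕ} (hE : E ∈ π) (hF : F ∈ π)
    (hsep : ¬ Reaches π E F) : ¬ Crossing (compU π E) (compU π F) := by
  rintro ⟨u1, hu1, u2, hu2, v1, hv1, v2, hv2, l1, l2, l3⟩
  obtain ⟨B1, hB1, hrB1, hu1'⟩ := mem_compU.mp hu1
  obtain ⟨B2, hB2, hrB2, hu2'⟩ := mem_compU.mp hu2
  obtain ⟨C1, hC1, hrC1, hv1'⟩ := mem_compU.mp hv1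
  obtain ⟨C2, hC2, hrC2, hv2'⟩ := mem_compU.mp hv2
  -- blocks in the F-component which meet (u1, u2) are trapped in it
  have hH : ∀ B, B ∈ π → Reaches π F B → (∃ x ∈ B, u1 < x ∧ x < u2) →
      ∀ y ∈ B, u1 < y ∧ y < u2 := by
    intro B hB hQB hxB y hy
    obtain ⟨w, hw, hw1, hw2⟩ := hxB
    by_contra hyc
    have hdisj : ∀ B', B' ∈ π → Reaches π E B' → B' ∩ B = ∅ :=
      fun B' hB' hr' => comp_sep hE hF hsep hB' hr' hQB
    have hy1 : y ≠ u1 := by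
      intro h; subst h
      have := comp_sep hE hF hsep hB1 hrB1 hQB
      have hyy : y ∈ B1 ∩ B := mem_inter.mpr ⟨hu1', hy⟩
      rw [this] at hyy; exact absurd hyy (notMem_empty y)
    have hy2 : y ≠ u2 := by
      intro h; subst h
      have := comp_sep hE hF hsep hB2 hrB2 hQB
      have hyy : y ∈ B2 ∩ B := mem_inter.mpr ⟨hu2', hy⟩
      rw [this] at hyy; exact absurd hyy (notMem_empty y)
    rcases Nat.lt_or_ge y u1 with hlt | hge
    · exact L1 hπ hB hE hdisj hy hw hB1 hrB1 hu1' hB2 hrB2 hu2'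
        (by omega) (by omega) (Or.inr (by omega))
    · have hgt : u2 < y := by omega
      exact L1 hπ hB hE hdisj hw hy hB2 hrB2 hu2' hB1 hrB1 hu1'
        (by omega) (by omega) (Or.inl (by omega))
  have hQstep : ∀ B C, B ∈ π → Reaches π F B → Adj π B C → Reaches π F C :=
    fun B C _ hr hadj => Relation.ReflTransGen.tail hr hadj
  have hr2 : Reaches π C1 C2 := reaches_trans (reaches_symm hF hrC1) hrC2
  have := (trapQ (Reaches π F) hQstep hH hC1 hrC1 hr2 ⟨v1, hv1', l1, l2⟩).2.2 v2 hv2'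
  omega

def compPartition (π : Finset (Finset ℕ)) : Finset (Finset ℕ) :=
  π.image (fun E => compU π E)

lemma cc {S : Finset ℕ} {π : Finset (Finset ℕ)} (hπ : IsNCLOn S π) :
    IsNCOn S (compPartition π) := by
  obtain ⟨hNE, hU, hPW⟩ := hπ
  refine ⟨?_, ?_, ?_⟩
  · intro U hUm
    obtain ⟨E, hE, rfl⟩ := mem_image.mp hUm
    exact (hNE E hE).mono (subset_compU hE)
  · apply subset_antisymm
    · intro x hx
      obtain ⟨U, hUm, hxU⟩ := by simpa using mem_biUnion.mp hx
      obtain ⟨E, hE, rfl⟩ := mem_image.mp hUm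
      obtain ⟨B, hB, _, hxB⟩ := mem_compU.mp hxU
      exact block_subset hU hB hxB
    · intro x hx
      obtain ⟨E, hE, hxE⟩ := exists_block hU hx
      exact mem_biUnion.mpr ⟨compU π E, mem_image_of_mem _ hE, subset_compU hE hxE⟩
  · intro U hUm V hVm hne
    obtain ⟨E, hE, rfl⟩ := mem_image.mp hUm
    obtain ⟨F, hF, rfl⟩ := mem_image.mp hVm
    have hsep : ¬ Reaches π E F := by
      intro h
      exact hne (compU_eq_of_reaches hE h)
    constructor
    · rw [disjoint_left]
      intro x hx hx'
      obtain ⟨B, hB, hrB, hxB⟩ := mem_compU.mp hx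
      obtain ⟨C, hC, hrC, hxC⟩ := mem_compU.mp hx'
      have := comp_sep hE hF hsep hB hrB hrC
      have hxx : x ∈ B ∩ C := mem_inter.mpr ⟨hxB, hxC⟩
      rw [this] at hxx; exact absurd hxx (notMem_empty x)
    · exact comp_noncross ⟨hNE, hU, hPW⟩ hE hF hsep

/-! ### Connectedness -/

def Conn (S : Finset ℕ) (π : Finset (Finset ℕ)) : Prop :=
  IsNCLOn S π ∧ ∀ τ, IsNCOn S τ → NCLle π τ → S ∈ τ

def GConn (S : Finset ℕ) (π : Finset (Finset ℕ)) : Prop :=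
  IsNCLOn S π ∧ ∀ E ∈ π, ∀ F ∈ π, Reaches π E F

lemma gconn_of_conn {S : Finset ℕ} {π : Finset (Finset ℕ)} (h : Conn S π) :
    GConn S π := by
  obtain ⟨hπ, hmin⟩ := h
  refine ⟨hπ, ?_⟩
  obtain ⟨hNE, hU, hPW⟩ := hπ
  have hcc := cc ⟨hNE, hU, hPW⟩
  have hle : NCLle π (compPartition π) := fun E hE =>
    ⟨compU π E, mem_image_of_mem _ hE, subset_compU hE⟩
  have hS := hmin _ hcc hle
  obtain ⟨E, hE, hSeq⟩ := mem_image.mp hS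
  have hreach : ∀ F ∈ π, Reaches π E F := by
    intro F hF
    obtain ⟨y, hy⟩ := hNE F hF
    have hyS : y ∈ S := block_subset hU hF hy
    rw [← hSeq] at hyS
    obtain ⟨B, hB, hrB, hyB⟩ := mem_compU.mp hyS
    exact Relation.ReflTransGen.tail hrB ⟨hF, ⟨y, mem_inter.mpr ⟨hyB, hy⟩⟩⟩
  intro F hF F' hF'
  exact reaches_trans (reaches_symm hE (hreach F hF)) (hreach F' hF')

lemma conn_of_gconn {S : Finset ℕ} {π : Finset (Finset ℕ)} (hS : S.Nonempty)
    (h : GConn S π) : Conn S π := by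
  obtain ⟨hπ, hreach⟩ := h
  refine ⟨hπ, ?_⟩
  obtain ⟨hNE, hU, hPW⟩ := hπ
  intro τ hτ hle
  obtain ⟨hNEτ, hUτ, hPWτ⟩ := hτ
  obtain ⟨x0, hx0⟩ := hS
  obtain ⟨E0, hE0, _⟩ := exists_block hU hx0
  obtain ⟨T, hT, hET⟩ := hle E0 hE0
  have hsub : ∀ F, Reaches π E0 F → F ⊆ T := by
    intro F hr
    induction hr with
    | refl => exact hET
    | tail h1 step ih =>
      obtain ⟨T', hT', hCT'⟩ := hle _ step.1
      have : T = T' := by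
        by_contra hne
        obtain ⟨x, hx⟩ := step.2
        have h1' := (mem_inter.mp hx).1
        have h2' := (mem_inter.mp hx).2
        exact (disjoint_left.mp (hPWτ T hT T' hT' hne).1 (ih h1')) (hCT' h2')
      rw [this]; exact hCT'
  have hTS : T = S := by
    apply subset_antisymm (block_subset hUτ hT)
    intro x hx
    obtain ⟨F, hF, hxF⟩ := exists_block hU hx
    exact hsub F (hreach E0 hE0 F hF) hxF
  rwa [hTS] at hT

/-! ### Sets of partitions -/

def ncSet (S : Finset ℕ) : Finset (Finset (Finset ℕ)) :=
  S.powerset.powerset.filter (IsNCOn S)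

def connSet (S : Finset ℕ) : Finset (Finset (Finset ℕ)) :=
  S.powerset.powerset.filter (Conn S)

lemma mem_ncSet {S : Finset ℕ} {π : Finset (Finset ℕ)} :
    π ∈ ncSet S ↔ IsNCOn S π :=
  ⟨fun h => (mem_filter.mp h).2, fun h => mem_filter.mpr ⟨mem_pp h.2.1, h⟩⟩

lemma mem_connSet {S : Finset ℕ} {π : Finset (Finset ℕ)} :
    π ∈ connSet S ↔ Conn S π :=
  ⟨fun h => (mem_filter.mp h).2, fun h => mem_filter.mpr ⟨mem_pp h.1.2.1, h⟩⟩

/-! ### Structure of connected NCL partitions -/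

lemma no_singleton {S : Finset ℕ} {π : Finset (Finset ℕ)} (hg : GConn S π)
    (hS : 1 < S.card) {E : Finset ℕ} (hE : E ∈ π) : 2 ≤ E.card := by
  obtain ⟨⟨hNE, hU, hPW⟩, hreach⟩ := hg
  by_contra hcard
  have hc1 : E.card = 1 := le_antisymm (by omega) (card_pos.mpr (hNE E hE))
  obtain ⟨x, hxE⟩ := card_eq_one.mp hc1
  subst hxE
  have hloc : ∀ F, Reaches π {x} F → F = {x} := by
    intro F hr
    induction hr with
    | refl => rfl
    | tail h1 step ih =>
      subst ih
      by_contra hne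
      obtain ⟨y, hy⟩ := step.2
      have hy1 : y ∈ ({x} : Finset ℕ) := (mem_inter.mp hy).1
      have hy2 := (mem_inter.mp hy).2
      have hnd := (hPW _ hE _ step.1 (Ne.symm hne)).2
      rcases hnd y hy with ⟨_, hcard2, _⟩ | ⟨hnm, _, _⟩
      · simp at hcard2
      · rw [mem_singleton] at hy1
        subst hy1
        exact hnm ⟨mem_singleton_self y, fun j hj => le_of_eq (mem_singleton.mp hj).symm⟩
  obtain ⟨a, ha, b, hb, hab⟩ := one_lt_card.mp hS
  obtain ⟨Fa, hFa, haF⟩ := exists_block hU ha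
  obtain ⟨Fb, hFb, hbF⟩ := exists_block hU hb
  have h1 := hloc Fa (hreach _ hE _ hFa)
  have h2 := hloc Fb (hreach _ hE _ hFb)
  subst h1; subst h2
  rw [mem_singleton] at haF hbF
  omega

/-- Gap lemma: in a connected NCL partition, there is no element of `S`
strictly between the two smallest elements of a block. -/
lemma gap {S : Finset ℕ} {π : Finset (Finset ℕ)} (hg : GConn S π)
    {E : Finset ℕ} (hE : E ∈ π) {a m x : ℕ}
    (ha : a ∈ E) (hamin : ∀ y ∈ E, a ≤ y)
    (hm : m ∈ E) (hnem : m ≠ a) (hmmin : ∀ y ∈ E, y ≠ a → m ≤ y)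
    (hx : x ∈ S) (h1 : a < x) (h2 : x < m) : False := by
  obtain ⟨⟨hNE, hU, hPW⟩, hreach⟩ := hg
  have ham : a < m := lt_of_le_of_ne (hamin m hm) (Ne.symm hnem)
  have hH : ∀ B, B ∈ π → True → (∃ w ∈ B, a < w ∧ w < m) → ∀ y ∈ B, a < y ∧ y < m := by
    intro B hB _ hxB y hy
    obtain ⟨w, hw, hw1, hw2⟩ := hxB
    have hBE : B ≠ E := by
      rintro rfl
      have := hmmin w hw (by omega)
      omega
    by_contra hyc
    have hPW1 := hPW B hB E hE hBE
    rcases Nat.lt_or_ge y a with hlt | hge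
    · exact hPW1.1 ⟨y, hy, w, hw, a, ha, m, hm, hlt, hw1, hw2⟩
    have hya : y = a ∨ (m < y) ∨ y = m := by omega
    rcases hya with heq | hgt | heq
    · have haB : a ∈ B := heq ▸ hy
      rcases hPW1.2 a (mem_inter.mpr ⟨haB, ha⟩) with ⟨_, _, hnmE⟩ | ⟨hnmB, _, _⟩
      · exact hnmE ⟨ha, hamin⟩
      · have hn : ¬ (a ∈ B ∧ ∀ j ∈ B, a ≤ j) := hnmB
        push_neg at hn
        obtain ⟨z, hz, hzlt⟩ := hn haB
        exact hPW1.1 ⟨z, hz, w, hw, a, ha, m, hm, by omega, hw1, hw2⟩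
    · exact (hPW E hE B hB (Ne.symm hBE)).1 ⟨a, ha, m, hm, w, hw, y, hy, hw1, hw2, hgt⟩
    · have hmB : m ∈ B := heq ▸ hy
      rcases hPW1.2 m (mem_inter.mpr ⟨hmB, hm⟩) with ⟨hminB, _, _⟩ | ⟨_, hminE, _⟩
      · have := hminB.2 w hw
        omega
      · have := hminE.2 a ha
        omega
  obtain ⟨D, hD, hxD⟩ := exists_block hU hx
  have hQstep : ∀ B C, B ∈ π → True → Adj π B C → True := fun _ _ _ _ _ => trivial
  have := (trapQ (fun _ => True) hQstep hH hD trivial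
    (hreach D hD E hE) ⟨x, hxD, h1, h2⟩).2.2 a ha
  omega

/-- Coverage lemma: in a connected NCL partition, every element other than the
minimum of `S` fails to be the minimum of some block containing it. -/
lemma coverage {S : Finset ℕ} {π : Finset (Finset ℕ)} (hg : GConn S π)
    {j : ℕ} (hj : j ∈ S) {z0 : ℕ} (hz0 : z0 ∈ S) (hz0j : z0 < j) :
    ∃ E ∈ π, j ∈ E ∧ ∃ z ∈ E, z < j := by
  obtain ⟨⟨hNE, hU, hPW⟩, hreach⟩ := hg
  by_contra hcon
  push_neg at hcon
  obtain ⟨Bs, hBs, hjBs⟩ := exists_block hU hj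
  obtain ⟨E0, hE0, hz0E0⟩ := exists_block hU hz0
  set R' : Finset ℕ → Finset ℕ → Prop := fun D C => Adj π D C ∧ ∀ z ∈ C, j ≤ z with hR'
  have aux : ∀ D, Relation.ReflTransGen R' Bs D → D ∈ π ∧ ∀ z ∈ D, j ≤ z := by
    intro D hD
    induction hD with
    | refl => exact ⟨hBs, hcon Bs hBs hjBs⟩
    | tail h1 step _ => exact ⟨step.1.1, step.2⟩
  have claim1 : ∀ B, Reaches π Bs B → Relation.ReflTransGen R' Bs B := by
    intro B hr
    induction hr with
    | refl => exact Relation.ReflTransGen.refl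
    | @tail D C h1 step ih =>
      by_cases hC : ∀ z ∈ C, j ≤ z
      · exact Relation.ReflTransGen.tail ih ⟨step, hC⟩
      · exfalso
        push_neg at hC
        obtain ⟨y', hy', hy'lt⟩ := hC
        obtain ⟨hDmem, hDmin⟩ := aux D ih
        have hCmem : C ∈ π := step.1
        obtain ⟨x, hxm⟩ := step.2
        have hxD : x ∈ D := (mem_inter.mp hxm).1
        have hxC : x ∈ C := (mem_inter.mp hxm).2
        have hxj : j ≤ x := hDmin x hxD
        have hCne : C.Nonempty := ⟨y', hy'⟩
        set y := C.min' hCne with hy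
        have hyC : y ∈ C := C.min'_mem hCne
        have hyj : y < j := lt_of_le_of_lt (C.min'_le y' hy') hy'lt
        have hDC : D ≠ C := fun h => absurd (hDmin y' (h ▸ hy')) (by omega)
        have hCBs : C ≠ Bs := fun h => absurd (hcon C hCmem (h ▸ hjBs) y' hy') (by omega)
        rcases (hPW D hDmem C hCmem hDC).2 x hxm with ⟨hminD, _, _⟩ | ⟨_, hminC, _⟩
        swap
        · have := hminC.2 y hyC
          omega
        rcases Nat.eq_or_lt_of_le hxj with heq | hltjx
        · exact absurd (hcon C hCmem (heq ▸ hxC) y' hy') (by omega)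
        have claim2 : ∀ Dd, Relation.ReflTransGen R' Bs Dd → ∀ w ∈ Dd, y < w ∧ w < x := by
          intro Dd hDd
          induction hDd with
          | refl =>
            intro w hw
            have hwj : j ≤ w := hcon Bs hBs hjBs w hw
            refine ⟨by omega, ?_⟩
            by_contra hwge
            push_neg at hwge
            rcases Nat.eq_or_lt_of_le hwge with heq | hlt
            · have hxBs : x ∈ Bs := heq ▸ hw
              rcases (hPW Bs hBs C hCmem (Ne.symm hCBs)).2 x
                  (mem_inter.mpr ⟨hxBs, hxC⟩) with ⟨hminBs, _, _⟩ | ⟨_, hminC2, _⟩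
              · have := hminBs.2 j hjBs
                omega
              · have := hminC2.2 y hyC
                omega
            · exact (hPW C hCmem Bs hBs hCBs).1
                ⟨y, hyC, x, hxC, j, hjBs, w, hw, hyj, hltjx, hlt⟩
          | @tail Dp Cp h1' step' ih' =>
            intro w hw
            obtain ⟨hadj, hmin'⟩ := step'
            obtain ⟨w', hw'm⟩ := hadj.2
            have hw'D : w' ∈ Dp := (mem_inter.mp hw'm).1
            have hw'C : w' ∈ Cp := (mem_inter.mp hw'm).2
            have hw'' := ih' w' hw'D
            have hwj : j ≤ w := hmin' w hw
            refine ⟨by omega, ?_⟩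
            by_contra hwge
            push_neg at hwge
            have hCpC : Cp ≠ C := fun h => absurd (hmin' y' (h ▸ hy')) (by omega)
            rcases Nat.eq_or_lt_of_le hwge with heq | hlt
            · have hxCp : x ∈ Cp := heq ▸ hw
              rcases (hPW Cp hadj.1 C hCmem hCpC).2 x
                  (mem_inter.mpr ⟨hxCp, hxC⟩) with ⟨hminCp, _, _⟩ | ⟨_, hminC2, _⟩
              · have := hminCp.2 w' hw'C
                omega
              · have := hminC2.2 y hyC
                omega
            · exact (hPW C hCmem Cp hadj.1 (Ne.symm hCpC)).1
                ⟨y, hyC, x, hxC, w', hw'C, w, hw, by omega, by omega, hlt⟩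
        have := claim2 D ih x hxD
        omega
  have hfin := claim1 E0 (hreach Bs hBs E0 hE0)
  have := (aux E0 hfin).2 z0 hz0E0
  omega

/-! ### The bijection between connected NCL partitions of `S`
and noncrossing partitions of `S` minus its minimum -/

def emin (E : Finset ℕ) : ℕ := if h : E.Nonempty then E.min' h else 0

lemma emin_eq {E : Finset ℕ} (h : E.Nonempty) : emin E = E.min' h := dif_pos h

def stripMin (π : Finset (Finset ℕ)) : Finset (Finset ℕ) :=
  π.image (fun E => E.erase (emin E))

def alphaF (S C : Finset ℕ) : ℕ :=
  if h : (S.filter (fun x => ∀ y ∈ C, x < y)).Nonempty then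
    (S.filter (fun x => ∀ y ∈ C, x < y)).max' h else 0

def addMin (S : Finset ℕ) (ρ : Finset (Finset ℕ)) : Finset (Finset ℕ) :=
  ρ.image (fun C => insert (alphaF S C) C)

lemma alphaF_spec {S C : Finset ℕ}
    (h : (S.filter (fun x => ∀ y ∈ C, x < y)).Nonempty) :
    alphaF S C ∈ S ∧ (∀ y ∈ C, alphaF S C < y) ∧
      ∀ x ∈ S, (∀ y ∈ C, x < y) → x ≤ alphaF S C := by
  rw [alphaF, dif_pos h]
  have hm := (S.filter (fun x => ∀ y ∈ C, x < y)).max'_mem h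
  rw [mem_filter] at hm
  exact ⟨hm.1, hm.2, fun x hx hlt => Finset.le_max' _ x (mem_filter.mpr ⟨hx, hlt⟩)⟩

lemma alphaF_filter_ne {S : Finset ℕ} (hSne : S.Nonempty) {C : Finset ℕ}
    (hC : C ⊆ S.erase (S.min' hSne)) :
    (S.filter (fun x => ∀ y ∈ C, x < y)).Nonempty := by
  refine ⟨S.min' hSne, mem_filter.mpr ⟨S.min'_mem hSne, fun y hy => ?_⟩⟩
  have h2 := hC hy
  rw [mem_erase] at h2
  exact lt_of_le_of_ne (S.min'_le y h2.2) (Ne.symm h2.1)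

/-- For a block of a connected NCL partition, the predecessor in `S` of the
second-smallest element is the smallest element (gap lemma reformulated). -/
lemma alphaF_strip {S : Finset ℕ} {π : Finset (Finset ℕ)} (hg : GConn S π)
    {E : Finset ℕ} (hE : E ∈ π) (h2 : 2 ≤ E.card) :
    alphaF S (E.erase (emin E)) = emin E := by
  have hEne : E.Nonempty := card_pos.mp (by omega)
  set a := E.min' hEne with ha
  rw [emin_eq hEne, ← ha]
  have haE : a ∈ E := E.min'_mem hEne
  have herane : (E.erase a).Nonempty := by
    rw [← card_pos, card_erase_of_mem haE]
    omega
  set m := (E.erase a).min' herane with hm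
  have hmE' : m ∈ E.erase a := Finset.min'_mem _ _
  have hmE : m ∈ E := mem_of_mem_erase hmE'
  have hmna : m ≠ a := (mem_erase.mp hmE').1
  have hmmin : ∀ y ∈ E, y ≠ a → m ≤ y := fun y hy hyne =>
    Finset.min'_le _ y (mem_erase.mpr ⟨hyne, hy⟩)
  have hfil : (S.filter (fun x => ∀ y ∈ E.erase a, x < y)).Nonempty := by
    refine ⟨a, mem_filter.mpr ⟨block_subset hg.1.2.1 hE haE, fun y hy => ?_⟩⟩
    rw [mem_erase] at hy
    exact lt_of_le_of_ne (E.min'_le y hy.2) (Ne.symm hy.1)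
  obtain ⟨hmem, hlt, hmax⟩ := alphaF_spec hfil
  have hle : alphaF S (E.erase a) ≤ a := by
    by_contra hgt
    push_neg at hgt
    exact gap hg hE haE (fun y hy => E.min'_le y hy) hmE hmna hmmin hmem hgt
      (hlt m hmE')
  have hge : a ≤ alphaF S (E.erase a) := by
    refine hmax a (block_subset hg.1.2.1 hE haE) fun y hy => ?_
    rw [mem_erase] at hy
    exact lt_of_le_of_ne (E.min'_le y hy.2) (Ne.symm hy.1)
  omega

lemma strip_mem {S : Finset ℕ} {π : Finset (Finset ℕ)} (hS : 1 < S.card)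
    (h : π ∈ connSet S) :
    stripMin π ∈ ncSet (S.erase (S.min' (card_pos.mp (by omega)))) := by
  have hSne : S.Nonempty := card_pos.mp (by omega)
  set s0 := S.min' hSne with hs0
  have hconn := mem_connSet.mp h
  have hg := gconn_of_conn hconn
  obtain ⟨⟨hNE, hU, hPW⟩, hreach⟩ := hg
  have hcard2 : ∀ E ∈ π, 2 ≤ E.card := fun E hE =>
    no_singleton ⟨⟨hNE, hU, hPW⟩, hreach⟩ hS hE
  have hgg : GConn S π := ⟨⟨hNE, hU, hPW⟩, hreach⟩
  -- for each block, the erased element is its min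
  have hemin : ∀ E ∈ π, ∃ hne : E.Nonempty, emin E = E.min' hne := by
    intro E hE
    exact ⟨hNE E hE, emin_eq _⟩
  rw [mem_ncSet]
  refine ⟨?_, ?_, ?_⟩
  · intro C hC
    obtain ⟨E, hE, rfl⟩ := mem_image.mp hC
    rw [← card_pos, card_erase_of_mem]
    · have := hcard2 E hE
      omega
    · rw [emin_eq (hNE E hE)]
      exact E.min'_mem _
  · apply subset_antisymm
    · intro x hx
      obtain ⟨C, hC, hxC⟩ := by simpa using mem_biUnion.mp hx
      obtain ⟨E, hE, rfl⟩ := mem_image.mp hC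
      rw [mem_erase] at hxC ⊢
      have hxE := hxC.2
      have hxS : x ∈ S := block_subset hU hE hxE
      refine ⟨?_, hxS⟩
      intro hxs0
      apply hxC.1
      rw [emin_eq (hNE E hE)]
      apply le_antisymm
      · rw [hxs0]
        exact S.min'_le _ (block_subset hU hE (E.min'_mem _))
      · exact E.min'_le x hxE
    · intro j hj
      rw [mem_erase] at hj
      have hs0j : s0 < j := lt_of_le_of_ne (S.min'_le j hj.2) (Ne.symm hj.1)
      obtain ⟨E, hE, hjE, z, hz, hzj⟩ := coverage hgg hj.2 (S.min'_mem hSne) hs0j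
      refine mem_biUnion.mpr ⟨E.erase (emin E), mem_image_of_mem _ hE, ?_⟩
      rw [id, mem_erase, emin_eq (hNE E hE)]
      refine ⟨?_, hjE⟩
      intro hjm
      have := E.min'_le z hz
      omega
  · intro C hC D hD hne
    obtain ⟨E, hE, rfl⟩ := mem_image.mp hC
    obtain ⟨F, hF, rfl⟩ := mem_image.mp hD
    have hEF : E ≠ F := by rintro rfl; exact hne rfl
    constructor
    · rw [disjoint_left]
      intro x hx hx'
      rw [mem_erase, emin_eq (hNE E hE)] at hx
      rw [mem_erase, emin_eq (hNE F hF)] at hx'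
      rcases (hPW E hE F hF hEF).2 x (mem_inter.mpr ⟨hx.2, hx'.2⟩) with
        ⟨hmin, _, _⟩ | ⟨_, hmin, _⟩
      · exact hx.1 ((isMinOf_iff (hNE E hE)).mp hmin).2
      · exact hx'.1 ((isMinOf_iff (hNE F hF)).mp hmin).2
    · intro hcr
      exact (hPW E hE F hF hEF).1 (crossing_mono (erase_subset _ _) (erase_subset _ _) hcr)

lemma addMin_pattern {S : Finset ℕ} {C D : Finset ℕ} {aC aD : ℕ}
    (hCS : C ⊆ S) (hDS : D ⊆ S) (hCne : C.Nonempty) (hDne : D.Nonempty)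
    (hdisj : Disjoint C D) (hncr : ¬ Crossing C D)
    (haCS : aC ∈ S) (haDS : aD ∈ S)
    (haC1 : ∀ y ∈ C, aC < y) (haC2 : ∀ x ∈ S, (∀ y ∈ C, x < y) → x ≤ aC)
    (haD1 : ∀ y ∈ D, aD < y) (haD2 : ∀ x ∈ S, (∀ y ∈ D, x < y) → x ≤ aD)
    {x1 y1 x2 y2 : ℕ} (hx1m : x1 ∈ insert aC C) (hx2m : x2 ∈ insert aC C)
    (hy1m : y1 ∈ insert aD D) (hy2m : y2 ∈ insert aD D)
    (l1 : x1 < y1) (l2 : y1 < x2) (l3 : x2 < y2) : False := by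
  have hx2C : x2 ∈ C := by
    rcases mem_insert.mp hx2m with heq | h
    · exfalso
      rcases mem_insert.mp hx1m with heq' | h'
      · omega
      · have := haC1 x1 h'
        omega
    · exact h
  have hy2D : y2 ∈ D := by
    rcases mem_insert.mp hy2m with heq | h
    · exfalso
      rcases mem_insert.mp hy1m with heq' | h'
      · omega
      · have := haD1 y1 h'
        omega
    · exact h
  have hmCm : C.min' hCne ∈ C := C.min'_mem hCne
  have hmDm : D.min' hDne ∈ D := D.min'_mem hDne
  rcases mem_insert.mp hy1m with hy1aD | hy1D
  · -- y1 = aD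
    subst hy1aD
    rcases lt_trichotomy x2 (D.min' hDne) with hlt | heq | hgt
    · have : x2 ≤ y1 := haD2 x2 (hCS hx2C) fun y hy =>
        lt_of_lt_of_le hlt (D.min'_le y hy)
      omega
    · exact disjoint_left.mp hdisj hx2C (heq ▸ hmDm)
    · rcases mem_insert.mp hx1m with hx1aC | hx1C
      · -- x1 = aC < aD
        subst hx1aC
        have hmCaD : C.min' hCne ≤ y1 := by
          by_contra hgt2
          push_neg at hgt2
          have : y1 ≤ x1 := haC2 y1 haDS fun y hy =>
            lt_of_lt_of_le hgt2 (C.min'_le y hy)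
          omega
        have haDmD : y1 < D.min' hDne := haD1 _ hmDm
        exact hncr ⟨C.min' hCne, hmCm, x2, hx2C, D.min' hDne, hmDm, y2, hy2D,
          by omega, hgt, l3⟩
      · have hx1aD : x1 < D.min' hDne := lt_trans l1 (haD1 _ hmDm)
        exact hncr ⟨x1, hx1C, x2, hx2C, D.min' hDne, hmDm, y2, hy2D,
          hx1aD, hgt, l3⟩
  · -- y1 ∈ D
    rcases lt_trichotomy (C.min' hCne) y1 with hlt | heq | hgt
    · exact hncr ⟨C.min' hCne, hmCm, x2, hx2C, y1, hy1D, y2, hy2D, hlt, l2, l3⟩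
    · exact disjoint_left.mp hdisj (heq ▸ hmCm) hy1D
    · have hy1aC : y1 ≤ aC := haC2 y1 (hDS hy1D) fun y hy =>
        lt_of_lt_of_le hgt (C.min'_le y hy)
      rcases mem_insert.mp hx1m with heq' | h'
      · omega
      · have := haC1 x1 h'
        omega

lemma addMin_mem {S : Finset ℕ} (hS : 1 < S.card) {ρ : Finset (Finset ℕ)}
    (hρ : ρ ∈ ncSet (S.erase (S.min' (card_pos.mp (by omega))))) :
    addMin S ρ ∈ connSet S := by
  have hSne : S.Nonempty := card_pos.mp (by omega)
  set s0 := S.min' hSne with hs0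
  set T := S.erase s0 with hTdef
  obtain ⟨hNEρ, hUρ, hPWρ⟩ := mem_ncSet.mp hρ
  have hTS : T ⊆ S := erase_subset _ _
  have hs0S : s0 ∈ S := S.min'_mem hSne
  have hTne : T.Nonempty := by
    rw [← card_pos, hTdef, card_erase_of_mem hs0S]
    omega
  set s1 := T.min' hTne with hs1
  have hs1T : s1 ∈ T := T.min'_mem hTne
  have hs0s1 : s0 < s1 := by
    rw [hs1]
    have h2 := mem_erase.mp hs1T
    exact lt_of_le_of_ne (S.min'_le _ h2.2) (Ne.symm h2.1)
  have hCsub : ∀ C ∈ ρ, C ⊆ T := fun C hC => block_subset hUρ hC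
  have hal : ∀ C ∈ ρ, alphaF S C ∈ S ∧ (∀ y ∈ C, alphaF S C < y) ∧
      ∀ x ∈ S, (∀ y ∈ C, x < y) → x ≤ alphaF S C :=
    fun C hC => alphaF_spec (alphaF_filter_ne hSne (hCsub C hC))
  have hTmem : ∀ {x : ℕ}, x ∈ S → x ≠ s0 → x ∈ T := fun hx hne =>
    mem_erase.mpr ⟨hne, hx⟩
  have hs0le : ∀ x ∈ S, s0 ≤ x := fun x hx => S.min'_le x hx
  have halne : ∀ C ∈ ρ, ∀ D ∈ ρ, C ≠ D → alphaF S C ≠ alphaF S D := by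
    have mono : ∀ C, ∀ hC : C ∈ ρ, ∀ D, ∀ hD : D ∈ ρ,
        C.min' (hNEρ C hC) < D.min' (hNEρ D hD) → alphaF S C < alphaF S D := by
      intro C hC D hD hlt
      have h1 : alphaF S C < C.min' (hNEρ C hC) := (hal C hC).2.1 _ (C.min'_mem _)
      have h2 : C.min' (hNEρ C hC) ≤ alphaF S D := by
        refine (hal D hD).2.2 _ (hTS (hCsub C hC (C.min'_mem _))) fun y hy => ?_
        exact lt_of_lt_of_le hlt (D.min'_le y hy)
      omega
    intro C hC D hD hne
    have hmne : C.min' (hNEρ C hC) ≠ D.min' (hNEρ D hD) := by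
      intro h
      exact disjoint_left.mp (hPWρ C hC D hD hne).1 (C.min'_mem _) (h ▸ D.min'_mem _)
    rcases lt_or_gt_of_ne hmne with h | h
    · exact Nat.ne_of_lt (mono C hC D hD h)
    · exact (Nat.ne_of_lt (mono D hD C hC h)).symm
  obtain ⟨C1, hC1, hs1C1⟩ := exists_block hUρ hs1T
  have haC1s0 : alphaF S C1 = s0 := by
    by_contra hne
    have h1 := (hal C1 hC1).1
    have h2 : alphaF S C1 ∈ T := hTmem h1 hne
    have h3 : s1 ≤ alphaF S C1 := T.min'_le _ h2
    have h4 : alphaF S C1 < s1 := (hal C1 hC1).2.1 s1 hs1C1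
    omega
  -- the key properties
  have hNE' : ∀ A ∈ addMin S ρ, A.Nonempty := by
    intro A hA
    obtain ⟨C, hC, rfl⟩ := mem_image.mp hA
    exact insert_nonempty _ _
  have hU' : (addMin S ρ).biUnion id = S := by
    apply subset_antisymm
    · intro x hx
      obtain ⟨A, hA, hxA⟩ := by simpa using mem_biUnion.mp hx
      obtain ⟨C, hC, rfl⟩ := mem_image.mp hA
      rcases mem_insert.mp hxA with heq | h
      · exact heq ▸ (hal C hC).1
      · exact hTS (hCsub C hC h)
    · intro x hx
      by_cases hxs0 : x = s0
      · refine mem_biUnion.mpr ⟨insert (alphaF S C1) C1, mem_image_of_mem _ hC1, ?_⟩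
        rw [id, hxs0, ← haC1s0]
        exact mem_insert_self _ _
      · obtain ⟨C, hC, hxC⟩ := exists_block hUρ (hTmem hx hxs0)
        exact mem_biUnion.mpr ⟨insert (alphaF S C) C, mem_image_of_mem _ hC,
          mem_insert_of_mem hxC⟩
  have hPW' : ∀ A ∈ addMin S ρ, ∀ B ∈ addMin S ρ, A ≠ B →
      ¬ Crossing A B ∧ NearlyDisjoint A B := by
    intro A hA B hB hne
    obtain ⟨C, hC, rfl⟩ := mem_image.mp hA
    obtain ⟨D, hD, rfl⟩ := mem_image.mp hB
    have hCD : C ≠ D := by rintro rfl; exact hne rfl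
    obtain ⟨hdisj, hncr⟩ := hPWρ C hC D hD hCD
    constructor
    · rintro ⟨x1, hx1m, x2, hx2m, y1, hy1m, y2, hy2m, l1, l2, l3⟩
      exact addMin_pattern (fun x h => hTS (hCsub C hC h)) (fun x h => hTS (hCsub D hD h))
        (hNEρ C hC) (hNEρ D hD) hdisj hncr (hal C hC).1 (hal D hD).1
        (hal C hC).2.1 (hal C hC).2.2 (hal D hD).2.1 (hal D hD).2.2
        hx1m hx2m hy1m hy2m l1 l2 l3
    · intro i hi
      have hiA := (mem_inter.mp hi).1
      have hiB := (mem_inter.mp hi).2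
      have hminA : IsMinOf (alphaF S C) (insert (alphaF S C) C) :=
        ⟨mem_insert_self _ _, fun j hj => by
          rcases mem_insert.mp hj with heq | h
          · omega
          · exact le_of_lt ((hal C hC).2.1 j h)⟩
      have hminB : IsMinOf (alphaF S D) (insert (alphaF S D) D) :=
        ⟨mem_insert_self _ _, fun j hj => by
          rcases mem_insert.mp hj with heq | h
          · omega
          · exact le_of_lt ((hal D hD).2.1 j h)⟩
      have hcardA : 1 < (insert (alphaF S C) C).card := by
        rw [card_insert_of_notMem fun h => lt_irrefl _ ((hal C hC).2.1 _ h)]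
        have := card_pos.mpr (hNEρ C hC)
        omega
      have hcardB : 1 < (insert (alphaF S D) D).card := by
        rw [card_insert_of_notMem fun h => lt_irrefl _ ((hal D hD).2.1 _ h)]
        have := card_pos.mpr (hNEρ D hD)
        omega
      rcases mem_insert.mp hiA with heqA | hiC
      · rcases mem_insert.mp hiB with heqB | hiD
        · exact absurd (heqA.symm.trans heqB) (halne C hC D hD hCD)
        · subst heqA
          refine Or.inl ⟨hminA, hcardA, ?_⟩
          intro hmin
          have h1 := hmin.2 (alphaF S D) (mem_insert_self _ _)
          have h2 := (hal D hD).2.1 _ hiD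
          omega
      · rcases mem_insert.mp hiB with heqB | hiD
        · subst heqB
          refine Or.inr ⟨?_, hminB, hcardB⟩
          intro hmin
          have h1 := hmin.2 (alphaF S C) (mem_insert_self _ _)
          have h2 := (hal C hC).2.1 _ hiC
          omega
        · exact absurd hiD (disjoint_left.mp hdisj hiC)
  refine mem_connSet.mpr (conn_of_gconn hSne ⟨⟨hNE', hU', hPW'⟩, ?_⟩)
  have hhub : insert (alphaF S C1) C1 ∈ addMin S ρ := mem_image_of_mem _ hC1
  have main : ∀ k : ℕ, ∀ C, (hC : C ∈ ρ) → C.min' (hNEρ C hC) ≤ k →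
      Reaches (addMin S ρ) (insert (alphaF S C1) C1) (insert (alphaF S C) C) := by
    intro k
    induction k with
    | zero =>
      intro C hC hk
      exfalso
      have h1 := (hal C hC).2.1 _ (C.min'_mem (hNEρ C hC))
      have h2 := hs0le _ (hal C hC).1
      omega
    | succ k ih =>
      intro C hC hk
      by_cases hCC1 : C = C1
      · subst hCC1
        exact Relation.ReflTransGen.refl
      · have haCs0 : alphaF S C ≠ s0 := by
          intro heq
          have hmCT : C.min' (hNEρ C hC) ∈ T := hCsub C hC (C.min'_mem _)
          have hs1le : s1 ≤ C.min' (hNEρ C hC) := T.min'_le _ hmCT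
          rcases Nat.eq_or_lt_of_le hs1le with heq1 | hlt1
          · -- s1 = min C, so s1 ∈ C ∩ C1
            apply hCC1
            by_contra hne2
            exact disjoint_left.mp (hPWρ C hC C1 hC1 hne2).1
              (heq1 ▸ C.min'_mem (hNEρ C hC)) hs1C1
          · -- s1 < min C : then s1 ≤ alphaF = s0, contradiction
            have : s1 ≤ alphaF S C := (hal C hC).2.2 s1 (hTS hs1T)
              fun y hy => lt_of_lt_of_le hlt1 (C.min'_le y hy)
            omega
        have haCT : alphaF S C ∈ T := hTmem (hal C hC).1 haCs0
        obtain ⟨D, hD, haCD⟩ := exists_block hUρ haCT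
        have hlt : D.min' (hNEρ D hD) ≤ k := by
          have h1 : D.min' (hNEρ D hD) ≤ alphaF S C := D.min'_le _ haCD
          have h2 : alphaF S C < C.min' (hNEρ C hC) := (hal C hC).2.1 _ (C.min'_mem _)
          omega
        refine Relation.ReflTransGen.tail (ih D hD hlt) ?_
        refine ⟨mem_image_of_mem _ hC, ⟨alphaF S C, mem_inter.mpr ⟨?_, ?_⟩⟩⟩
        · exact mem_insert_of_mem haCD
        · exact mem_insert_self _ _
  intro A hA B hB
  obtain ⟨C, hC, rfl⟩ := mem_image.mp hA
  obtain ⟨D, hD, rfl⟩ := mem_image.mp hB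
  exact reaches_trans
    (reaches_symm hhub (main _ C hC (le_refl _)))
    (main _ D hD (le_refl _))

lemma strip_addMin {S : Finset ℕ} (hS : 1 < S.card) {ρ : Finset (Finset ℕ)}
    (hρ : ρ ∈ ncSet (S.erase (S.min' (card_pos.mp (by omega))))) :
    stripMin (addMin S ρ) = ρ := by
  have hSne : S.Nonempty := card_pos.mp (by omega)
  obtain ⟨hNEρ, hUρ, hPWρ⟩ := mem_ncSet.mp hρ
  rw [stripMin, addMin, image_image]
  have h : ∀ C ∈ ρ,
      (insert (alphaF S C) C).erase (emin (insert (alphaF S C) C)) = C := by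
    intro C hC
    obtain ⟨hmem, hlt, _⟩ := alphaF_spec (alphaF_filter_ne hSne (block_subset hUρ hC))
    have hnm : alphaF S C ∉ C := fun h => lt_irrefl _ (hlt _ h)
    have hemin : emin (insert (alphaF S C) C) = alphaF S C := by
      rw [emin_eq (insert_nonempty _ _)]
      apply le_antisymm
      · exact min'_le _ _ (mem_insert_self _ _)
      · apply le_min'
        intro y hy
        rcases mem_insert.mp hy with heq | hmem2
        · omega
        · exact le_of_lt (hlt _ hmem2)
    rw [hemin, erase_insert hnm]
  exact (Finset.image_congr fun C hC => h C (by simpa using hC)).trans image_id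

lemma addMin_strip {S : Finset ℕ} (hS : 1 < S.card) {π : Finset (Finset ℕ)}
    (h : π ∈ connSet S) : addMin S (stripMin π) = π := by
  have hg := gconn_of_conn (mem_connSet.mp h)
  have hNE := hg.1.1
  rw [addMin, stripMin, image_image]
  have haux : ∀ E ∈ π,
      insert (alphaF S (E.erase (emin E))) (E.erase (emin E)) = E := by
    intro E hE
    rw [alphaF_strip hg hE (no_singleton hg hS hE), emin_eq (hNE E hE)]
    exact insert_erase (E.min'_mem _)
  exact (Finset.image_congr fun E hE => haux E (by simpa using hE)).trans image_id

lemma conn_card_eq_nc {S : Finset ℕ} (hS : 1 < S.card) :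
    (connSet S).card = (ncSet (S.erase (S.min' (card_pos.mp (by omega))))).card := by
  exact Finset.card_bij' (fun π _ => stripMin π) (fun ρ _ => addMin S ρ)
    (fun π hπ => strip_mem hS hπ) (fun ρ hρ => addMin_mem hS hρ)
    (fun π hπ => addMin_strip hS hπ) (fun ρ hρ => strip_addMin hS hρ)

lemma ncSet_empty : ncSet ∅ = {∅} := by
  ext π
  rw [mem_ncSet, mem_singleton]
  constructor
  · rintro ⟨hNE, hU, _⟩
    by_contra hne
    obtain ⟨E, hE⟩ := nonempty_iff_ne_empty.mpr hne
    obtain ⟨x, hx⟩ := hNE E hE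
    have hc : x ∈ (∅ : Finset ℕ) := by
      rw [← hU]; exact mem_biUnion.mpr ⟨E, hE, hx⟩
    simp at hc
  · rintro rfl
    refine ⟨by simp, by simp, by simp⟩

lemma connSet_singleton (x : ℕ) :
    connSet {x} = {({({x} : Finset ℕ)} : Finset (Finset ℕ))} := by
  ext π
  rw [mem_connSet, mem_singleton]
  constructor
  · rintro ⟨⟨hNE, hU, _⟩, _⟩
    apply subset_antisymm
    · intro E hE
      rw [mem_singleton]
      apply subset_antisymm (block_subset hU hE)
      intro y hy
      rw [mem_singleton] at hy
      subst hy
      obtain ⟨z, hz⟩ := hNE E hE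
      have hz2 : z ∈ ({y} : Finset ℕ) := block_subset hU hE hz
      rw [mem_singleton] at hz2
      rwa [← hz2]
    · intro E hE
      rw [mem_singleton] at hE
      subst hE
      obtain ⟨F, hF, hxF⟩ := exists_block hU (mem_singleton_self x)
      have hFx : F = {x} := by
        apply subset_antisymm (block_subset hU hF)
        intro y hy
        rw [mem_singleton] at hy
        subst hy
        exact hxF
      rwa [← hFx]
  · rintro rfl
    refine ⟨⟨?_, ?_, ?_⟩, ?_⟩
    · intro E hE
      rw [mem_singleton] at hE
      subst hE
      exact singleton_nonempty x
    · simp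
    · intro E hE F hF hne
      rw [mem_singleton] at hE hF
      subst hE; subst hF
      exact absurd rfl hne
    · intro τ hτ hle
      obtain ⟨T, hT, hsub⟩ := hle {x} (mem_singleton_self _)
      have hTsub := block_subset hτ.2.1 hT
      have hTx : T = {x} := subset_antisymm hTsub hsub
      rwa [← hTx]

/-! ### Transport along monotone bijections -/

lemma transport_isNCOn {S T : Finset ℕ} {f g : ℕ → ℕ}
    (hfT : ∀ x ∈ S, f x ∈ T) (hgS : ∀ y ∈ T, g y ∈ S)
    (hgf : ∀ x ∈ S, g (f x) = x) (hfg : ∀ y ∈ T, f (g y) = y)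
    (hmono : ∀ x ∈ S, ∀ y ∈ S, x < y → f x < f y)
    {π : Finset (Finset ℕ)} (hπ : IsNCOn S π) :
    IsNCOn T (π.image (fun E => E.image f)) := by
  obtain ⟨hNE, hU, hPW⟩ := hπ
  have hblk : ∀ E ∈ π, E ⊆ S := fun E hE => block_subset hU hE
  have hreflect : ∀ {a b : ℕ}, a ∈ S → b ∈ S → f a < f b → a < b := by
    intro a b ha hb hlt
    rcases lt_trichotomy a b with h | h | h
    · exact h
    · subst h; omega
    · exact absurd (hmono b hb a ha h) (by omega)
  have hinj : ∀ {a b : ℕ}, a ∈ S → b ∈ S → f a = f b → a = b := by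
    intro a b ha hb heq
    have h1 := hgf a ha
    have h2 := hgf b hb
    have h3 : g (f a) = g (f b) := by rw [heq]
    omega
  refine ⟨?_, ?_, ?_⟩
  · intro A hA
    obtain ⟨E, hE, rfl⟩ := mem_image.mp hA
    exact (hNE E hE).image f
  · apply subset_antisymm
    · intro y hy
      obtain ⟨A, hA, hyA⟩ := mem_biUnion.mp hy
      obtain ⟨E, hE, rfl⟩ := mem_image.mp hA
      obtain ⟨x, hx, rfl⟩ := mem_image.mp hyA
      exact hfT x (hblk E hE hx)
    · intro y hy
      obtain ⟨E, hE, hgE⟩ := exists_block hU (hgS y hy)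
      refine mem_biUnion.mpr ⟨E.image f, mem_image_of_mem _ hE, ?_⟩
      rw [id]
      exact mem_image.mpr ⟨g y, hgE, hfg y hy⟩
  · intro A hA B hB hne
    obtain ⟨E, hE, rfl⟩ := mem_image.mp hA
    obtain ⟨F, hF, rfl⟩ := mem_image.mp hB
    have hEF : E ≠ F := by rintro rfl; exact hne rfl
    constructor
    · rw [disjoint_left]
      intro y hy hy'
      obtain ⟨x1, hx1, rfl⟩ := mem_image.mp hy
      obtain ⟨x2, hx2, heq⟩ := mem_image.mp hy'
      have := hinj (hblk F hF hx2) (hblk E hE hx1) heq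
      subst this
      exact disjoint_left.mp (hPW E hE F hF hEF).1 hx1 hx2
    · rintro ⟨i1, hi1, i2, hi2, j1, hj1, j2, hj2, l1, l2, l3⟩
      obtain ⟨a1, ha1, rfl⟩ := mem_image.mp hi1
      obtain ⟨a2, ha2, rfl⟩ := mem_image.mp hi2
      obtain ⟨b1, hb1, rfl⟩ := mem_image.mp hj1
      obtain ⟨b2, hb2, rfl⟩ := mem_image.mp hj2
      exact (hPW E hE F hF hEF).2 ⟨a1, ha1, a2, ha2, b1, hb1, b2, hb2,
        hreflect (hblk E hE ha1) (hblk F hF hb1) l1,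
        hreflect (hblk F hF hb1) (hblk E hE ha2) l2,
        hreflect (hblk E hE ha2) (hblk F hF hb2) l3⟩

lemma transport_card {S T : Finset ℕ} (f g : ℕ → ℕ)
    (hfT : ∀ x ∈ S, f x ∈ T) (hgS : ∀ y ∈ T, g y ∈ S)
    (hgf : ∀ x ∈ S, g (f x) = x) (hfg : ∀ y ∈ T, f (g y) = y)
    (hmono : ∀ x ∈ S, ∀ y ∈ S, x < y → f x < f y) :
    (ncSet S).card = (ncSet T).card := by
  have hmono' : ∀ x ∈ T, ∀ y ∈ T, x < y → g x < g y := by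
    intro x hx y hy hlt
    rcases lt_trichotomy (g x) (g y) with h | h | h
    · exact h
    · exfalso
      have h1 := hfg x hx
      have h2 := hfg y hy
      rw [← h1, ← h2, h] at hlt
      omega
    · exfalso
      have := hmono _ (hgS y hy) _ (hgS x hx) h
      rw [hfg x hx, hfg y hy] at this
      omega
  have hback : ∀ (h1 : ℕ → ℕ) (h2 : ℕ → ℕ) (U : Finset ℕ),
      (∀ x ∈ U, h2 (h1 x) = x) → ∀ E : Finset ℕ, E ⊆ U →
      (E.image h1).image h2 = E := by
    intro h1 h2 U hh E hEU
    rw [image_image]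
    refine (Finset.image_congr ?_).trans image_id
    intro x hx
    exact hh x (hEU (by simpa using hx))
  refine Finset.card_bij' (fun π _ => π.image (fun E => E.image f))
    (fun τ _ => τ.image (fun E => E.image g)) ?_ ?_ ?_ ?_
  · intro π hπ
    exact mem_ncSet.mpr (transport_isNCOn hfT hgS hgf hfg hmono (mem_ncSet.mp hπ))
  · intro τ hτ
    exact mem_ncSet.mpr (transport_isNCOn hgS hfT hfg hgf hmono' (mem_ncSet.mp hτ))
  · intro π hπ
    rw [image_image]
    refine (Finset.image_congr ?_).trans image_id
    intro E hE
    exact hback f g S (fun x hx => hgf x hx) E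
      (block_subset (mem_ncSet.mp hπ).2.1 (by simpa using hE))
  · intro τ hτ
    rw [image_image]
    refine (Finset.image_congr ?_).trans image_id
    intro E hE
    exact hback g f T (fun x hx => hfg x hx) E
      (block_subset (mem_ncSet.mp hτ).2.1 (by simpa using hE))

/-! ### Counting noncrossing partitions of an interval: the Catalan recursion -/

lemma sup_id_mem (s : Finset ℕ) (h : s.Nonempty) : s.sup id ∈ s := by
  have h1 : s.max' h ∈ s := s.max'_mem h
  have h2 : s.sup id = s.max' h := by
    apply le_antisymm
    · exact Finset.sup_le fun b hb => s.le_max' b hb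
    · exact Finset.le_sup (f := id) h1
  rwa [h2]

def blOf (x : ℕ) (π : Finset (Finset ℕ)) : Finset ℕ :=
  if h : ∃ E, E ∈ π ∧ x ∈ E then h.choose else ∅

lemma blOf_spec {x : ℕ} {π : Finset (Finset ℕ)} (h : ∃ E, E ∈ π ∧ x ∈ E) :
    blOf x π ∈ π ∧ x ∈ blOf x π := by
  rw [blOf, dif_pos h]
  exact h.choose_spec

lemma blOf_eq {S : Finset ℕ} {x : ℕ} {π : Finset (Finset ℕ)} (hπ : IsNCOn S π)
    {E : Finset ℕ} (hE : E ∈ π) (hxE : x ∈ E) : blOf x π = E := by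
  obtain ⟨h1, h2⟩ := blOf_spec ⟨E, hE, hxE⟩
  by_contra hne
  exact disjoint_left.mp (hπ.2.2 _ h1 E hE hne).1 h2 hxE

def statN (N : ℕ) (π : Finset (Finset ℕ)) : ℕ := ((blOf N π).erase N).sup id

lemma statN_facts {m : ℕ} {π : Finset (Finset ℕ)} (hπ : IsNCOn (Finset.Icc 1 (m+1)) π) :
    blOf (m+1) π ∈ π ∧ (m+1) ∈ blOf (m+1) π ∧
      (blOf (m+1) π).erase (m+1) ⊆ Finset.Icc 1 (statN (m+1) π) ∧
      statN (m+1) π ≤ m ∧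
      (((blOf (m+1) π).erase (m+1)).Nonempty → statN (m+1) π ∈ (blOf (m+1) π).erase (m+1)) := by
  have hNmem : m + 1 ∈ Finset.Icc 1 (m+1) := by
    rw [mem_Icc]; omega
  obtain ⟨E0, hE0, hN0⟩ := exists_block hπ.2.1 hNmem
  obtain ⟨hB, hNB⟩ := blOf_spec ⟨E0, hE0, hN0⟩
  set B' := (blOf (m+1) π).erase (m+1) with hB'
  have hB'le : ∀ x ∈ B', 1 ≤ x ∧ x ≤ m := by
    intro x hx
    have h1 := block_subset hπ.2.1 hB (mem_of_mem_erase hx)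
    rw [mem_Icc] at h1
    have h2 := (mem_erase.mp hx).1
    omega
  have hstat_le : statN (m+1) π ≤ m := by
    rw [statN]
    apply Finset.sup_le
    intro b hb
    exact (hB'le b hb).2
  refine ⟨hB, hNB, ?_, hstat_le, ?_⟩
  · intro x hx
    rw [mem_Icc]
    exact ⟨(hB'le x hx).1, Finset.le_sup (f := id) hx⟩
  · intro hne
    exact sup_id_mem _ hne

lemma nc_split {m j : ℕ} {π : Finset (Finset ℕ)} (hπ : IsNCOn (Finset.Icc 1 (m+1)) π)
    (hstat : statN (m+1) π = j)
    {E : Finset ℕ} (hE : E ∈ π) (hEB : E ≠ blOf (m+1) π) :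
    E ⊆ Finset.Icc 1 j ∨ E ⊆ Finset.Icc (j+1) m := by
  obtain ⟨hB, hNB, hB'sub, hstatle, hB'mem⟩ := statN_facts hπ
  have hEsub : E ⊆ Finset.Icc 1 (m+1) := block_subset hπ.2.1 hE
  have hNnE : (m+1) ∉ E := by
    intro h
    exact hEB (disjoint_left.mp (hπ.2.2 E hE _ hB hEB).1 h hNB).elim
  have hEm : ∀ z ∈ E, 1 ≤ z ∧ z ≤ m := by
    intro z hz
    have h1 := hEsub hz
    rw [mem_Icc] at h1
    have : z ≠ m + 1 := fun h => hNnE (h ▸ hz)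
    omega
  by_cases hall : ∀ z ∈ E, z ≤ j
  · left
    intro z hz
    rw [mem_Icc]
    exact ⟨(hEm z hz).1, hall z hz⟩
  · right
    push_neg at hall
    obtain ⟨y, hy, hjy⟩ := hall
    intro z hz
    rw [mem_Icc]
    refine ⟨?_, (hEm z hz).2⟩
    by_contra hzj
    push_neg at hzj
    have hzj' : z ≤ j := by omega
    -- j ≥ 1 and j ∈ B
    have hj1 : 1 ≤ j := by
      have := (hEm z hz).1
      omega
    have hB'ne : ((blOf (m+1) π).erase (m+1)).Nonempty := by
      by_contra hc
      rw [not_nonempty_iff_eq_empty] at hc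
      rw [statN, hc] at hstat
      simp at hstat
      omega
    have hjB : j ∈ blOf (m+1) π := by
      have := hB'mem hB'ne
      rw [hstat] at this
      exact mem_of_mem_erase this
    rcases Nat.eq_or_lt_of_le hzj' with heq | hlt
    · exact (disjoint_left.mp (hπ.2.2 E hE _ hB hEB).1 hz (heq ▸ hjB)).elim
    · refine (hπ.2.2 E hE _ hB hEB).2 ⟨z, hz, y, hy, j, hjB, m+1, hNB, hlt, hjy, ?_⟩
      exact Nat.lt_succ_of_le (hEm y hy).2

def fwd1 (N j : ℕ) (π : Finset (Finset ℕ)) : Finset (Finset ℕ) :=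
  (π.image (fun E => E.erase N)).filter (fun E => E.Nonempty ∧ E ⊆ Finset.Icc 1 j)

def fwd2 (j m : ℕ) (π : Finset (Finset ℕ)) : Finset (Finset ℕ) :=
  π.filter (fun E => E ⊆ Finset.Icc (j+1) m)

def bwd (N j : ℕ) (p : Finset (Finset ℕ) × Finset (Finset ℕ)) : Finset (Finset ℕ) :=
  (p.1.image (fun E => if j ∈ E then insert N E else E)) ∪ p.2 ∪
    (if j = 0 then {({N} : Finset ℕ)} else ∅)

lemma fwd_mem {m j : ℕ} {π : Finset (Finset ℕ)} (hπ : IsNCOn (Finset.Icc 1 (m+1)) π)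
    (hstat : statN (m+1) π = j) :
    IsNCOn (Finset.Icc 1 j) (fwd1 (m+1) j π) ∧
      IsNCOn (Finset.Icc (j+1) m) (fwd2 j m π) := by
  obtain ⟨hB, hNB, hB'sub, hstatle, hB'mem⟩ := statN_facts hπ
  obtain ⟨hNE, hU, hPW⟩ := hπ
  rw [hstat] at hB'sub hstatle
  constructor
  · refine ⟨?_, ?_, ?_⟩
    · intro A hA
      exact (mem_filter.mp hA).2.1
    · apply subset_antisymm
      · intro x hx
        obtain ⟨A, hA, hxA⟩ := mem_biUnion.mp hx
        exact (mem_filter.mp hA).2.2 hxA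
      · intro x hx
        rw [mem_Icc] at hx
        have hxm : x ∈ Finset.Icc 1 (m+1) := by rw [mem_Icc]; omega
        obtain ⟨E, hE, hxE⟩ := exists_block hU hxm
        have hxN : x ≠ m + 1 := by omega
        have hCsub : E.erase (m+1) ⊆ Finset.Icc 1 j := by
          by_cases hEB : E = blOf (m+1) π
          · rw [hEB]; exact hB'sub
          · rcases nc_split ⟨hNE, hU, hPW⟩ hstat hE hEB with h | h
            · exact (erase_subset _ _).trans h
            · exfalso
              have := h hxE
              rw [mem_Icc] at this
              omega
        refine mem_biUnion.mpr ⟨E.erase (m+1), ?_, mem_erase.mpr ⟨hxN, hxE⟩⟩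
        exact mem_filter.mpr ⟨mem_image_of_mem _ hE,
          ⟨x, mem_erase.mpr ⟨hxN, hxE⟩⟩, hCsub⟩
    · intro A hA A' hA' hne
      obtain ⟨E, hE, rfl⟩ := mem_image.mp (mem_filter.mp hA).1
      obtain ⟨F, hF, rfl⟩ := mem_image.mp (mem_filter.mp hA').1
      have hEF : E ≠ F := by rintro rfl; exact hne rfl
      exact ⟨((hPW E hE F hF hEF).1).mono (erase_subset _ _) (erase_subset _ _),
        fun hc => (hPW E hE F hF hEF).2
          (crossing_mono (erase_subset _ _) (erase_subset _ _) hc)⟩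
  · refine ⟨?_, ?_, ?_⟩
    · intro A hA
      exact hNE A (mem_filter.mp hA).1
    · apply subset_antisymm
      · intro x hx
        obtain ⟨A, hA, hxA⟩ := mem_biUnion.mp hx
        exact (mem_filter.mp hA).2 hxA
      · intro x hx
        rw [mem_Icc] at hx
        have hxm : x ∈ Finset.Icc 1 (m+1) := by rw [mem_Icc]; omega
        obtain ⟨E, hE, hxE⟩ := exists_block hU hxm
        have hEB : E ≠ blOf (m+1) π := by
          rintro rfl
          have hxN : x ≠ m + 1 := by omega
          have := hB'sub (mem_erase.mpr ⟨hxN, hxE⟩)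
          rw [mem_Icc] at this
          omega
        rcases nc_split ⟨hNE, hU, hPW⟩ hstat hE hEB with h | h
        · exfalso
          have := h hxE
          rw [mem_Icc] at this
          omega
        · exact mem_biUnion.mpr ⟨E, mem_filter.mpr ⟨hE, h⟩, hxE⟩
    · intro A hA A' hA' hne
      exact hPW A (mem_filter.mp hA).1 A' (mem_filter.mp hA').1 hne

lemma mem_Icc_nat {a b x : ℕ} : x ∈ Finset.Icc a b ↔ a ≤ x ∧ x ≤ b := mem_Icc

lemma bwdcross_low {j N : ℕ} {E D : Finset ℕ} (hE : E ⊆ Finset.Icc 1 j)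
    (hD : D ⊆ Finset.Icc 1 j) (hjE : j ∈ E) (hjN : j < N)
    (hdisj : Disjoint E D) (h1 : ¬ Crossing E D) (h2 : ¬ Crossing D E) :
    ¬ Crossing (insert N E) D ∧ ¬ Crossing D (insert N E) := by
  have hDle : ∀ x ∈ D, x ≤ j := fun x hx => (mem_Icc_nat.mp (hD hx)).2
  have hEle : ∀ x ∈ E, x ≤ j := fun x hx => (mem_Icc_nat.mp (hE hx)).2
  constructor
  · rintro ⟨a1, ha1, a2, ha2, d1, hd1, d2, hd2, l1, l2, l3⟩
    have ha2E : a2 ∈ E := by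
      rcases mem_insert.mp ha2 with heq | h
      · exfalso
        have := hDle d2 hd2
        omega
      · exact h
    have ha1E : a1 ∈ E := by
      rcases mem_insert.mp ha1 with heq | h
      · exfalso
        have := hDle d1 hd1
        omega
      · exact h
    exact h1 ⟨a1, ha1E, a2, ha2E, d1, hd1, d2, hd2, l1, l2, l3⟩
  · rintro ⟨d1, hd1, d2, hd2, a1, ha1, a2, ha2, l1, l2, l3⟩
    have ha1E : a1 ∈ E := by
      rcases mem_insert.mp ha1 with heq | h
      · exfalso
        have := hDle d2 hd2
        omega
      · exact h
    rcases mem_insert.mp ha2 with heq | h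
    · -- a2 = N : use j as the second element of E
      have hd2j : d2 ≤ j := hDle d2 hd2
      rcases Nat.eq_or_lt_of_le hd2j with heq2 | hlt2
      · exact disjoint_left.mp hdisj (heq2 ▸ hjE) hd2
      · exact h2 ⟨d1, hd1, d2, hd2, a1, ha1E, j, hjE, l1, l2, hlt2⟩
    · exact h2 ⟨d1, hd1, d2, hd2, a1, ha1E, a2, h, l1, l2, l3⟩

lemma bwdcross_high {j m : ℕ} {E D : Finset ℕ} (hE : E ⊆ Finset.Icc 1 j)
    (hD : D ⊆ Finset.Icc (j+1) m) :
    ¬ Crossing (insert (m+1) E) D ∧ ¬ Crossing D (insert (m+1) E) ∧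
      Disjoint (insert (m+1) E) D := by
  have hDle : ∀ x ∈ D, j + 1 ≤ x ∧ x ≤ m := fun x hx => mem_Icc_nat.mp (hD hx)
  have hEle : ∀ x ∈ E, x ≤ j := fun x hx => (mem_Icc_nat.mp (hE hx)).2
  refine ⟨?_, ?_, ?_⟩
  · rintro ⟨a1, ha1, a2, ha2, d1, hd1, d2, hd2, l1, l2, l3⟩
    have h1 := hDle d1 hd1
    have h2 := hDle d2 hd2
    rcases mem_insert.mp ha2 with heq | h
    · omega
    · have := hEle a2 h
      omega
  · rintro ⟨d1, hd1, d2, hd2, a1, ha1, a2, ha2, l1, l2, l3⟩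
    have h1 := hDle d1 hd1
    have h2 := hDle d2 hd2
    rcases mem_insert.mp ha1 with heq | h
    · omega
    · have := hEle a1 h
      omega
  · rw [disjoint_left]
    intro x hx hx'
    have h1 := hDle x hx'
    rcases mem_insert.mp hx with heq | h
    · omega
    · have := hEle x h
      omega

lemma cross_lowhigh {j m : ℕ} {L H : Finset ℕ} (hL : L ⊆ Finset.Icc 1 j)
    (hH : H ⊆ Finset.Icc (j+1) m) :
    ¬ Crossing L H ∧ ¬ Crossing H L ∧ Disjoint L H := by
  have hLle : ∀ x ∈ L, x ≤ j := fun x hx => (mem_Icc_nat.mp (hL hx)).2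
  have hHle : ∀ x ∈ H, j + 1 ≤ x := fun x hx => (mem_Icc_nat.mp (hH hx)).1
  refine ⟨?_, ?_, ?_⟩
  · rintro ⟨a1, ha1, a2, ha2, d1, hd1, d2, hd2, l1, l2, l3⟩
    have := hLle a2 ha2
    have := hHle d1 hd1
    omega
  · rintro ⟨a1, ha1, a2, ha2, d1, hd1, d2, hd2, l1, l2, l3⟩
    have := hLle d1 hd1
    have := hHle a1 ha1
    omega
  · rw [disjoint_left]
    intro x hx hx'
    have := hLle x hx
    have := hHle x hx'
    omega

lemma mem_bwd {N j : ℕ} {ρ₁ ρ₂ : Finset (Finset ℕ)} {A : Finset ℕ} :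
    A ∈ bwd N j (ρ₁, ρ₂) ↔
      (∃ E ∈ ρ₁, A = (if j ∈ E then insert N E else E)) ∨ A ∈ ρ₂ ∨
        (j = 0 ∧ A = {N}) := by
  rw [bwd, mem_union, mem_union]
  constructor
  · rintro ((h | h) | h)
    · obtain ⟨E, hE, hEq⟩ := mem_image.mp h
      exact Or.inl ⟨E, hE, hEq.symm⟩
    · exact Or.inr (Or.inl h)
    · by_cases hj0 : j = 0
      · rw [if_pos hj0, mem_singleton] at h
        exact Or.inr (Or.inr ⟨hj0, h⟩)
      · rw [if_neg hj0] at h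
        simp at h
  · rintro (⟨E, hE, hEq⟩ | h | ⟨hj0, hEq⟩)
    · exact Or.inl (Or.inl (mem_image.mpr ⟨E, hE, hEq.symm⟩))
    · exact Or.inl (Or.inr h)
    · subst hEq
      rw [if_pos hj0]
      exact Or.inr (mem_singleton_self _)

lemma bwd_facts {m j : ℕ} (hjm : j ≤ m) {ρ₁ ρ₂ : Finset (Finset ℕ)}
    (h1 : IsNCOn (Finset.Icc 1 j) ρ₁) (h2 : IsNCOn (Finset.Icc (j+1) m) ρ₂) :
    IsNCOn (Finset.Icc 1 (m+1)) (bwd (m+1) j (ρ₁, ρ₂)) ∧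
      statN (m+1) (bwd (m+1) j (ρ₁, ρ₂)) = j := by
  obtain ⟨hNE1, hU1, hPW1⟩ := h1
  obtain ⟨hNE2, hU2, hPW2⟩ := h2
  have hsub1 : ∀ E ∈ ρ₁, E ⊆ Finset.Icc 1 j := fun E hE => block_subset hU1 hE
  have hsub2 : ∀ E ∈ ρ₂, E ⊆ Finset.Icc (j+1) m := fun E hE => block_subset hU2 hE
  have hle1 : ∀ E ∈ ρ₁, ∀ x ∈ E, 1 ≤ x ∧ x ≤ j := by
    intro E hE x hx
    exact mem_Icc_nat.mp (hsub1 E hE hx)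
  have hle2 : ∀ E ∈ ρ₂, ∀ x ∈ E, j + 1 ≤ x ∧ x ≤ m := by
    intro E hE x hx
    exact mem_Icc_nat.mp (hsub2 E hE hx)
  have hρ₁j0 : j = 0 → ∀ E, E ∉ ρ₁ := by
    intro hj0 E hE
    obtain ⟨x, hx⟩ := hNE1 E hE
    have := hle1 E hE x hx
    omega
  have huniq : ∀ E ∈ ρ₁, j ∈ E → ∀ F ∈ ρ₁, j ∈ F → E = F := by
    intro E hE hjE F hF hjF
    by_contra hne
    exact disjoint_left.mp (hPW1 E hE F hF hne).1 hjE hjF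
  have hNC : IsNCOn (Finset.Icc 1 (m+1)) (bwd (m+1) j (ρ₁, ρ₂)) := by
    refine ⟨?_, ?_, ?_⟩
    · intro A hA
      rcases mem_bwd.mp hA with ⟨E, hE, rfl⟩ | h | ⟨hj0, rfl⟩
      · split
        · exact insert_nonempty _ _
        · exact hNE1 E hE
      · exact hNE2 A h
      · exact singleton_nonempty _
    · apply subset_antisymm
      · intro x hx
        obtain ⟨A, hA, hxA⟩ := mem_biUnion.mp hx
        rw [mem_Icc_nat]
        rcases mem_bwd.mp hA with ⟨E, hE, rfl⟩ | h | ⟨hj0, rfl⟩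
        · split at hxA
          · rcases mem_insert.mp hxA with heq | hmem
            · omega
            · have := hle1 E hE x hmem
              omega
          · have := hle1 E hE x hxA
            omega
        · have := hle2 A h x hxA
          omega
        · have : x = m + 1 := by simpa using hxA
          omega
      · intro x hx
        rw [mem_Icc_nat] at hx
        rcases Nat.lt_or_ge x (j+1) with hxj | hxj
        · -- x ≤ j, so j ≥ 1 and x is covered by ρ₁
          have hxIcc : x ∈ Finset.Icc 1 j := by rw [mem_Icc_nat]; omega
          obtain ⟨E, hE, hxE⟩ := exists_block hU1 hxIcc
          refine mem_biUnion.mpr ⟨(if j ∈ E then insert (m+1) E else E),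
            mem_bwd.mpr (Or.inl ⟨E, hE, rfl⟩), ?_⟩
          have hsub : E ⊆ (if j ∈ E then insert (m+1) E else E) := by
            split
            · exact subset_insert _ _
            · exact subset_rfl
          exact hsub hxE
        · rcases Nat.lt_or_ge x (m+1) with hxm | hxm
          · have hxIcc : x ∈ Finset.Icc (j+1) m := by rw [mem_Icc_nat]; omega
            obtain ⟨E, hE, hxE⟩ := exists_block hU2 hxIcc
            exact mem_biUnion.mpr ⟨E, mem_bwd.mpr (Or.inr (Or.inl hE)), hxE⟩
          · have hxeq : x = m + 1 := by omega
            subst hxeq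
            by_cases hj0 : j = 0
            · exact mem_biUnion.mpr ⟨{m+1}, mem_bwd.mpr (Or.inr (Or.inr ⟨hj0, rfl⟩)),
                mem_singleton_self _⟩
            · have hjIcc : j ∈ Finset.Icc 1 j := by rw [mem_Icc_nat]; omega
              obtain ⟨E, hE, hjE⟩ := exists_block hU1 hjIcc
              refine mem_biUnion.mpr ⟨(if j ∈ E then insert (m+1) E else E),
                mem_bwd.mpr (Or.inl ⟨E, hE, rfl⟩), ?_⟩
              rw [if_pos hjE]
              exact mem_insert_self _ _
    · intro A hA B hB hne
      rcases mem_bwd.mp hA with ⟨E, hE, rfl⟩ | hA2 | ⟨hj0, rfl⟩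
      · rcases mem_bwd.mp hB with ⟨F, hF, rfl⟩ | hB2 | ⟨hj0, rfl⟩
        · -- both from ρ₁
          have hEF : E ≠ F := by rintro rfl; exact hne rfl
          by_cases hjE : j ∈ E
          · by_cases hjF : j ∈ F
            · exact absurd (huniq E hE hjE F hF hjF) hEF
            · rw [if_pos hjE, if_neg hjF]
              refine ⟨?_, (bwdcross_low (hsub1 E hE) (hsub1 F hF) hjE (by omega)
                (hPW1 E hE F hF hEF).1 (hPW1 E hE F hF hEF).2
                (hPW1 F hF E hE (Ne.symm hEF)).2).1⟩
              rw [disjoint_insert_left]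
              refine ⟨?_, (hPW1 E hE F hF hEF).1⟩
              intro hc
              have := hle1 F hF _ hc
              omega
          · by_cases hjF : j ∈ F
            · rw [if_neg hjE, if_pos hjF]
              refine ⟨?_, (bwdcross_low (hsub1 F hF) (hsub1 E hE) hjF (by omega)
                (hPW1 F hF E hE (Ne.symm hEF)).1 (hPW1 F hF E hE (Ne.symm hEF)).2
                (hPW1 E hE F hF hEF).2).2⟩
              rw [disjoint_insert_right]
              refine ⟨?_, (hPW1 E hE F hF hEF).1⟩
              intro hc
              have := hle1 E hE _ hc
              omega
            · rw [if_neg hjE, if_neg hjF]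
              exact hPW1 E hE F hF hEF
        · -- A from ρ₁, B from ρ₂
          by_cases hjE : j ∈ E
          · rw [if_pos hjE]
            obtain ⟨c1, c2, c3⟩ := bwdcross_high (hsub1 E hE) (hsub2 B hB2)
            exact ⟨c3, c1⟩
          · rw [if_neg hjE]
            obtain ⟨c1, c2, c3⟩ := cross_lowhigh (hsub1 E hE) (hsub2 B hB2)
            exact ⟨c3, c1⟩
        · exact absurd hE (hρ₁j0 hj0 E)
      · rcases mem_bwd.mp hB with ⟨F, hF, rfl⟩ | hB2 | ⟨hj0, rfl⟩
        · by_cases hjF : j ∈ F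
          · rw [if_pos hjF]
            obtain ⟨c1, c2, c3⟩ := bwdcross_high (hsub1 F hF) (hsub2 A hA2)
            exact ⟨c3.symm, c2⟩
          · rw [if_neg hjF]
            obtain ⟨c1, c2, c3⟩ := cross_lowhigh (hsub1 F hF) (hsub2 A hA2)
            exact ⟨c3.symm, c2⟩
        · exact hPW2 A hA2 B hB2 hne
        · constructor
          · rw [disjoint_left]
            intro x hx hx'
            rw [mem_singleton] at hx'
            have := hle2 A hA2 x hx
            omega
          · exact not_crossing_singleton_right
      · rcases mem_bwd.mp hB with ⟨F, hF, rfl⟩ | hB2 | ⟨hj0', rfl⟩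
        · exact absurd hF (hρ₁j0 hj0 F)
        · constructor
          · rw [disjoint_left]
            intro x hx hx'
            rw [mem_singleton] at hx
            have := hle2 B hB2 x hx'
            omega
          · exact not_crossing_singleton_left
        · exact absurd rfl hne
  refine ⟨hNC, ?_⟩
  by_cases hj0 : j = 0
  · have hbl : blOf (m+1) (bwd (m+1) j (ρ₁, ρ₂)) = {m+1} :=
      blOf_eq hNC (mem_bwd.mpr (Or.inr (Or.inr ⟨hj0, rfl⟩))) (mem_singleton_self _)
    rw [statN, hbl, erase_singleton]
    simpa using hj0.symm
  · have hjIcc : j ∈ Finset.Icc 1 j := by rw [mem_Icc_nat]; omega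
    obtain ⟨E₁, hE₁, hjE₁⟩ := exists_block hU1 hjIcc
    have hmemA : insert (m+1) E₁ ∈ bwd (m+1) j (ρ₁, ρ₂) :=
      mem_bwd.mpr (Or.inl ⟨E₁, hE₁, by rw [if_pos hjE₁]⟩)
    have hbl : blOf (m+1) (bwd (m+1) j (ρ₁, ρ₂)) = insert (m+1) E₁ :=
      blOf_eq hNC hmemA (mem_insert_self _ _)
    have hNnot : m + 1 ∉ E₁ := by
      intro hc
      have := hle1 E₁ hE₁ _ hc
      omega
    rw [statN, hbl, erase_insert hNnot]
    apply le_antisymm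
    · apply Finset.sup_le
      intro b hb
      exact (hle1 E₁ hE₁ b hb).2
    · exact Finset.le_sup (f := id) hjE₁

lemma bwd_fwd {m j : ℕ} {π : Finset (Finset ℕ)} (hπ : IsNCOn (Finset.Icc 1 (m+1)) π)
    (hstat : statN (m+1) π = j) :
    bwd (m+1) j (fwd1 (m+1) j π, fwd2 j m π) = π := by
  obtain ⟨hB, hNB, hB'sub, hstatle, hB'mem⟩ := statN_facts hπ
  rw [hstat] at hB'sub hstatle
  have hNE := hπ.1
  have hU := hπ.2.1
  have hPW := hπ.2.2
  have hNonly : ∀ E ∈ π, (m+1) ∈ E → E = blOf (m+1) π := fun E hE hN =>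
    (blOf_eq hπ hE hN).symm
  have hNnotE : ∀ E ∈ π, E ≠ blOf (m+1) π → (m+1) ∉ E := fun E hE hne hN =>
    hne (hNonly E hE hN)
  have hjB' : 1 ≤ j → j ∈ (blOf (m+1) π).erase (m+1) := by
    intro hj1
    have hne : ((blOf (m+1) π).erase (m+1)).Nonempty := by
      by_contra hc
      rw [not_nonempty_iff_eq_empty] at hc
      rw [statN, hc] at hstat
      simp at hstat
      omega
    have := hB'mem hne
    rwa [hstat] at this
  have hjnotE : ∀ E ∈ π, E ≠ blOf (m+1) π → j ∉ E := by
    intro E hE hne hjE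
    have hj1 : 1 ≤ j := by
      have := block_subset hU hE hjE
      rw [mem_Icc_nat] at this
      omega
    exact disjoint_left.mp (hPW E hE _ hB hne).1 hjE (mem_of_mem_erase (hjB' hj1))
  ext A
  constructor
  · intro hA
    rcases mem_bwd.mp hA with ⟨C, hC, rfl⟩ | h | ⟨hj0, rfl⟩
    · obtain ⟨himg, hCne, hCsub⟩ := mem_filter.mp hC
      obtain ⟨E, hE, rfl⟩ := mem_image.mp himg
      by_cases hjC : j ∈ E.erase (m+1)
      · rw [if_pos hjC]
        have hEB : E = blOf (m+1) π := by
          by_contra hne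
          exact hjnotE E hE hne (mem_of_mem_erase hjC)
        subst hEB
        rw [insert_erase hNB]
        exact hB
      · rw [if_neg hjC]
        have hEB : E ≠ blOf (m+1) π := by
          rintro rfl
          apply hjC
          have hj1 : 1 ≤ j := by
            obtain ⟨x, hx⟩ := hCne
            have := hCsub hx
            rw [mem_Icc_nat] at this
            omega
          exact hjB' hj1
        rwa [erase_eq_of_notMem (hNnotE E hE hEB)]
    · exact (mem_filter.mp h).1
    · have hBN : blOf (m+1) π = {m+1} := by
        apply subset_antisymm
        · intro x hx
          rw [mem_singleton]
          by_contra hne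
          have hxB' : x ∈ (blOf (m+1) π).erase (m+1) := mem_erase.mpr ⟨hne, hx⟩
          have := hB'sub hxB'
          rw [mem_Icc_nat] at this
          omega
        · intro x hx
          rw [mem_singleton] at hx
          exact hx ▸ hNB
      exact hBN ▸ hB
  · intro hA
    by_cases hAB : A = blOf (m+1) π
    · subst hAB
      by_cases hj0 : j = 0
      · refine mem_bwd.mpr (Or.inr (Or.inr ⟨hj0, ?_⟩))
        apply subset_antisymm
        · intro x hx
          rw [mem_singleton]
          by_contra hne
          have hxB' : x ∈ (blOf (m+1) π).erase (m+1) := mem_erase.mpr ⟨hne, hx⟩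
          have := hB'sub hxB'
          rw [mem_Icc_nat] at this
          omega
        · intro x hx
          rw [mem_singleton] at hx
          exact hx ▸ hNB
      · have hj1 : 1 ≤ j := by omega
        have hjB'' := hjB' hj1
        refine mem_bwd.mpr (Or.inl ⟨(blOf (m+1) π).erase (m+1), ?_, ?_⟩)
        · exact mem_filter.mpr ⟨mem_image_of_mem _ hB, ⟨j, hjB''⟩, hB'sub⟩
        · rw [if_pos hjB'', insert_erase hNB]
    · rcases nc_split hπ hstat hA hAB with h | h
      · refine mem_bwd.mpr (Or.inl ⟨A, ?_, ?_⟩)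
        · refine mem_filter.mpr ⟨?_, hNE A hA, h⟩
          exact mem_image.mpr ⟨A, hA, erase_eq_of_notMem (hNnotE A hA hAB)⟩
        · rw [if_neg (hjnotE A hA hAB)]
      · exact mem_bwd.mpr (Or.inr (Or.inl (mem_filter.mpr ⟨hA, h⟩)))

lemma fwd_bwd {m j : ℕ} (hjm : j ≤ m) {ρ₁ ρ₂ : Finset (Finset ℕ)}
    (h1 : IsNCOn (Finset.Icc 1 j) ρ₁) (h2 : IsNCOn (Finset.Icc (j+1) m) ρ₂) :
    fwd1 (m+1) j (bwd (m+1) j (ρ₁, ρ₂)) = ρ₁ ∧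
      fwd2 j m (bwd (m+1) j (ρ₁, ρ₂)) = ρ₂ := by
  obtain ⟨hNE1, hU1, hPW1⟩ := h1
  obtain ⟨hNE2, hU2, hPW2⟩ := h2
  have hle1 : ∀ E ∈ ρ₁, ∀ x ∈ E, 1 ≤ x ∧ x ≤ j := fun E hE x hx =>
    mem_Icc_nat.mp (block_subset hU1 hE hx)
  have hle2 : ∀ E ∈ ρ₂, ∀ x ∈ E, j + 1 ≤ x ∧ x ≤ m := fun E hE x hx =>
    mem_Icc_nat.mp (block_subset hU2 hE hx)
  have hN1 : ∀ E ∈ ρ₁, (m+1) ∉ E := by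
    intro E hE hc
    have := hle1 E hE _ hc
    omega
  have hN2 : ∀ E ∈ ρ₂, (m+1) ∉ E := by
    intro E hE hc
    have := hle2 E hE _ hc
    omega
  constructor
  · ext C
    constructor
    · intro hC
      obtain ⟨himg, hCne, hCsub⟩ := mem_filter.mp hC
      obtain ⟨A, hAbwd, rfl⟩ := mem_image.mp himg
      rcases mem_bwd.mp hAbwd with ⟨E, hE, rfl⟩ | h | ⟨hj0, rfl⟩
      · by_cases hjE : j ∈ E
        · rw [if_pos hjE, erase_insert (hN1 E hE)]
          exact hE
        · rw [if_neg hjE, erase_eq_of_notMem (hN1 E hE)]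
          exact hE
      · exfalso
        rw [erase_eq_of_notMem (hN2 A h)] at hCne hCsub
        obtain ⟨x, hx⟩ := hCne
        have hx1 := hle2 A h x hx
        have hx2 := mem_Icc_nat.mp (hCsub hx)
        omega
      · exfalso
        rw [erase_singleton] at hCne
        exact not_nonempty_empty hCne
    · intro hC
      refine mem_filter.mpr ⟨?_, hNE1 C hC, block_subset hU1 hC⟩
      refine mem_image.mpr ⟨(if j ∈ C then insert (m+1) C else C),
        mem_bwd.mpr (Or.inl ⟨C, hC, rfl⟩), ?_⟩
      by_cases hjC : j ∈ C
      · rw [if_pos hjC, erase_insert (hN1 C hC)]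
      · rw [if_neg hjC, erase_eq_of_notMem (hN1 C hC)]
  · ext A
    constructor
    · intro hA
      obtain ⟨hAbwd, hAsub⟩ := mem_filter.mp hA
      rcases mem_bwd.mp hAbwd with ⟨E, hE, rfl⟩ | h | ⟨hj0, rfl⟩
      · exfalso
        by_cases hjE : j ∈ E
        · rw [if_pos hjE] at hAsub
          have := mem_Icc_nat.mp (hAsub (mem_insert_self _ _))
          omega
        · rw [if_neg hjE] at hAsub
          obtain ⟨x, hx⟩ := hNE1 E hE
          have h1 := hle1 E hE x hx
          have h2 := mem_Icc_nat.mp (hAsub hx)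
          omega
      · exact h
      · exfalso
        have := mem_Icc_nat.mp (hAsub (mem_singleton_self _))
        omega
    · intro hA
      exact mem_filter.mpr ⟨mem_bwd.mpr (Or.inr (Or.inl hA)), block_subset hU2 hA⟩

lemma fiber_card {m j : ℕ} (hjm : j ≤ m) :
    ((ncSet (Finset.Icc 1 (m+1))).filter (fun π => statN (m+1) π = j)).card
      = ((ncSet (Finset.Icc 1 j)) ×ˢ (ncSet (Finset.Icc (j+1) m))).card := by
  refine Finset.card_bij' (fun π _ => (fwd1 (m+1) j π, fwd2 j m π))
    (fun p _ => bwd (m+1) j p) ?_ ?_ ?_ ?_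
  · intro π hπ
    obtain ⟨hmem, hstat⟩ := mem_filter.mp hπ
    obtain ⟨hf1, hf2⟩ := fwd_mem (mem_ncSet.mp hmem) hstat
    exact mem_product.mpr ⟨mem_ncSet.mpr hf1, mem_ncSet.mpr hf2⟩
  · intro p hp
    obtain ⟨ρ₁, ρ₂⟩ := p
    obtain ⟨hp1, hp2⟩ := mem_product.mp hp
    obtain ⟨hNC, hstat⟩ := bwd_facts hjm (mem_ncSet.mp hp1) (mem_ncSet.mp hp2)
    exact mem_filter.mpr ⟨mem_ncSet.mpr hNC, hstat⟩
  · intro π hπ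
    obtain ⟨hmem, hstat⟩ := mem_filter.mp hπ
    exact bwd_fwd (mem_ncSet.mp hmem) hstat
  · intro p hp
    obtain ⟨ρ₁, ρ₂⟩ := p
    obtain ⟨hp1, hp2⟩ := mem_product.mp hp
    obtain ⟨hf1, hf2⟩ := fwd_bwd hjm (mem_ncSet.mp hp1) (mem_ncSet.mp hp2)
    rw [hf1, hf2]

lemma nc_shift {j m : ℕ} (h : j ≤ m) :
    (ncSet (Finset.Icc (j+1) m)).card = (ncSet (Finset.Icc 1 (m-j))).card := by
  refine transport_card (fun x => x - j) (fun x => x + j) ?_ ?_ ?_ ?_ ?_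
  · intro x hx
    rw [mem_Icc_nat] at hx ⊢
    omega
  · intro y hy
    rw [mem_Icc_nat] at hy ⊢
    omega
  · intro x hx
    rw [mem_Icc_nat] at hx
    omega
  · intro y hy
    rw [mem_Icc_nat] at hy
    omega
  · intro x hx y hy hlt
    rw [mem_Icc_nat] at hx hy
    omega

lemma nc_card : ∀ m : ℕ, (ncSet (Finset.Icc 1 m)).card = catalan m := by
  intro m
  induction m using Nat.strong_induction_on with
  | _ m ih =>
    cases m with
    | zero =>
      rw [Finset.Icc_eq_empty (by omega), ncSet_empty, card_singleton, catalan_zero]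
    | succ m' =>
      have hsplit : (ncSet (Finset.Icc 1 (m'+1))).card
          = ∑ j ∈ Finset.range (m'+1),
            ((ncSet (Finset.Icc 1 (m'+1))).filter (fun π => statN (m'+1) π = j)).card := by
        apply Finset.card_eq_sum_card_fiberwise
        intro π hπ
        rw [mem_coe, mem_range]
        have := (statN_facts (mem_ncSet.mp hπ)).2.2.2.1
        omega
      rw [hsplit]
      have hterm : ∀ j ∈ Finset.range (m'+1),
          ((ncSet (Finset.Icc 1 (m'+1))).filter (fun π => statN (m'+1) π = j)).card
            = catalan j * catalan (m' - j) := by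
        intro j hj
        rw [mem_range] at hj
        have hjm : j ≤ m' := by omega
        rw [fiber_card hjm, Finset.card_product, ih j (by omega),
          nc_shift hjm, ih (m' - j) (by omega)]
      rw [Finset.sum_congr rfl hterm, catalan_succ,
        Fin.sum_univ_eq_sum_range (fun i => catalan i * catalan (m' - i)) (m'+1)]

lemma nc_card_any (T : Finset ℕ) : (ncSet T).card = catalan T.card := by
  have e : Fin T.card ≃o {x // x ∈ T} := T.orderIsoOfFin rfl
  rw [← nc_card T.card]
  refine transport_card
    (fun x => if hx : x ∈ T then ((e.symm ⟨x, hx⟩ : Fin T.card) : ℕ) + 1 else 0)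
    (fun y => if hy : y - 1 < T.card then (e ⟨y - 1, hy⟩ : ℕ) else 0) ?_ ?_ ?_ ?_ ?_
  · intro x hx
    rw [dif_pos hx, mem_Icc_nat]
    have := (e.symm ⟨x, hx⟩).isLt
    omega
  · intro y hy
    rw [mem_Icc_nat] at hy
    have hylt : y - 1 < T.card := by omega
    rw [dif_pos hylt]
    exact (e ⟨y - 1, hylt⟩).2
  · intro x hx
    rw [dif_pos hx]
    have hlt : (e.symm ⟨x, hx⟩ : ℕ) + 1 - 1 < T.card := by
      have := (e.symm ⟨x, hx⟩).isLt
      omega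
    rw [dif_pos hlt]
    have h2 : (⟨(e.symm ⟨x, hx⟩ : ℕ) + 1 - 1, hlt⟩ : Fin T.card) = e.symm ⟨x, hx⟩ := by
      apply Fin.ext
      simp
    rw [h2]
    simp
  · intro y hy
    rw [mem_Icc_nat] at hy
    have hylt : y - 1 < T.card := by omega
    rw [dif_pos hylt]
    have hmem : (e ⟨y - 1, hylt⟩ : ℕ) ∈ T := (e ⟨y - 1, hylt⟩).2
    rw [dif_pos hmem]
    have h2 : (⟨(e ⟨y - 1, hylt⟩ : ℕ), hmem⟩ : {x // x ∈ T}) = e ⟨y - 1, hylt⟩ :=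
      Subtype.ext rfl
    rw [h2]
    simp only [OrderIso.symm_apply_apply]
    omega
  · intro x hx y hy hlt
    rw [dif_pos hx, dif_pos hy]
    have h1 : e.symm ⟨x, hx⟩ < e.symm ⟨y, hy⟩ := by
      rw [OrderIso.lt_iff_lt]
      exact Subtype.mk_lt_mk.mpr hlt
    have h2 := Fin.lt_def.mp h1
    omega

lemma conn_card {S : Finset ℕ} (hS : S.Nonempty) :
    (connSet S).card = catalan (S.card - 1) := by
  by_cases hc : S.card = 1
  · obtain ⟨x, rfl⟩ := card_eq_one.mp hc
    rw [connSet_singleton, card_singleton, card_singleton]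
    simp [catalan_zero]
  · have h2 : 1 < S.card := by
      have := card_pos.mpr hS
      omega
    rw [conn_card_eq_nc h2, nc_card_any, card_erase_of_mem (S.min'_mem _)]

/-! ### The blockwise decomposition -/

lemma restrict_mem {n : ℕ} {σ π : Finset (Finset ℕ)} (hσ : IsNC n σ)
    (hNCL : IsNCLOn (Finset.Icc 1 n) π) (hgen : GeneratesNC n π σ)
    {B : Finset ℕ} (hB : B ∈ σ) :
    π.filter (fun E => E ⊆ B) ∈ connSet B := by
  obtain ⟨hNEσ, hUσ, hPWσ⟩ := hσ
  obtain ⟨hNE, hU, hPW⟩ := hNCL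
  obtain ⟨hσ', hle, hmin⟩ := hgen
  rw [mem_connSet]
  have hUB : (π.filter (fun E => E ⊆ B)).biUnion id = B := by
    apply subset_antisymm
    · intro x hx
      obtain ⟨E, hE, hxE⟩ := mem_biUnion.mp hx
      exact (mem_filter.mp hE).2 hxE
    · intro x hx
      have hxI : x ∈ Finset.Icc 1 n := block_subset hUσ hB hx
      obtain ⟨E, hE, hxE⟩ := exists_block hU hxI
      obtain ⟨B', hB', hEB'⟩ := hle E hE
      have hBB' : B = B' := by
        by_contra hne
        exact disjoint_left.mp (hPWσ B hB B' hB' hne).1 hx (hEB' hxE)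
      exact mem_biUnion.mpr ⟨E, mem_filter.mpr ⟨hE, hBB' ▸ hEB'⟩, hxE⟩
  refine ⟨⟨?_, hUB, ?_⟩, ?_⟩
  · intro E hE
    exact hNE E (mem_filter.mp hE).1
  · intro E hE F hF hne
    exact hPW E (mem_filter.mp hE).1 F (mem_filter.mp hF).1 hne
  · intro τ hτ hleτ
    obtain ⟨hNEτ, hUτ, hPWτ⟩ := hτ
    set σ' := (σ.erase B) ∪ τ with hσ'def
    have hτsub : ∀ T ∈ τ, T ⊆ B := fun T hT => block_subset hUτ hT
    have hIsNC : IsNC n σ' := by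
      refine ⟨?_, ?_, ?_⟩
      · intro C hC
        rcases mem_union.mp hC with h | h
        · exact hNEσ C (mem_of_mem_erase h)
        · exact hNEτ C h
      · apply subset_antisymm
        · intro x hx
          obtain ⟨C, hC, hxC⟩ := mem_biUnion.mp hx
          rcases mem_union.mp hC with h | h
          · exact block_subset hUσ (mem_of_mem_erase h) hxC
          · exact block_subset hUσ hB (hτsub C h hxC)
        · intro x hx
          rw [← hUσ] at hx
          obtain ⟨C, hC, hxC⟩ := mem_biUnion.mp hx
          by_cases hCB : C = B
          · subst hCB
            obtain ⟨T, hT, hxT⟩ := exists_block hUτ hxC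
            exact mem_biUnion.mpr ⟨T, mem_union_right _ hT, hxT⟩
          · exact mem_biUnion.mpr ⟨C, mem_union_left _ (mem_erase.mpr ⟨hCB, hC⟩), hxC⟩
      · intro C hC D hD hne
        rcases mem_union.mp hC with h1 | h1 <;> rcases mem_union.mp hD with h2 | h2
        · exact hPWσ C (mem_of_mem_erase h1) D (mem_of_mem_erase h2) hne
        · have hCB : C ≠ B := (mem_erase.mp h1).1
          have hd := (hPWσ C (mem_of_mem_erase h1) B hB hCB).1
          refine ⟨hd.mono_right (hτsub D h2), fun hc => ?_⟩
          exact (hPWσ C (mem_of_mem_erase h1) B hB hCB).2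
            (crossing_mono subset_rfl (hτsub D h2) hc)
        · have hDB : D ≠ B := (mem_erase.mp h2).1
          have hd := (hPWσ D (mem_of_mem_erase h2) B hB hDB).1
          refine ⟨(hd.mono_right (hτsub C h1)).symm, fun hc => ?_⟩
          exact (hPWσ B hB D (mem_of_mem_erase h2) (Ne.symm hDB)).2
            (crossing_mono (hτsub C h1) subset_rfl hc)
        · exact hPWτ C h1 D h2 hne
    have hleσ' : NCLle π σ' := by
      intro E hE
      obtain ⟨B', hB', hEB'⟩ := hle E hE
      by_cases hBB' : B' = B
      · subst hBB'
        obtain ⟨T, hT, hET⟩ := hleτ E (mem_filter.mpr ⟨hE, hEB'⟩)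
        exact ⟨T, mem_union_right _ hT, hET⟩
      · exact ⟨B', mem_union_left _ (mem_erase.mpr ⟨hBB', hB'⟩), hEB'⟩
    obtain ⟨C, hC, hBC⟩ := hmin σ' hIsNC hleσ' B hB
    rcases mem_union.mp hC with h | h
    · exfalso
      have hCB : C ≠ B := (mem_erase.mp h).1
      obtain ⟨x, hx⟩ := hNEσ B hB
      exact disjoint_left.mp (hPWσ B hB C (mem_of_mem_erase h) (Ne.symm hCB)).1
        hx (hBC hx)
    · have : C = B := subset_antisymm (hτsub C h) hBC
      exact this ▸ h

lemma glue_mem {n : ℕ} {σ : Finset (Finset ℕ)} (hσ : IsNC n σ)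
    (f : ∀ B ∈ σ, Finset (Finset ℕ)) (hf : ∀ B (hB : B ∈ σ), f B hB ∈ connSet B) :
    IsNCLOn (Finset.Icc 1 n) (σ.attach.biUnion (fun b => f b.1 b.2)) ∧
      GeneratesNC n (σ.attach.biUnion (fun b => f b.1 b.2)) σ := by
  obtain ⟨hNEσ, hUσ, hPWσ⟩ := hσ
  set π := σ.attach.biUnion (fun b => f b.1 b.2) with hπdef
  have hmemπ : ∀ {E}, E ∈ π ↔ ∃ B, ∃ hB : B ∈ σ, E ∈ f B hB := by
    intro E
    rw [hπdef, mem_biUnion]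
    constructor
    · rintro ⟨⟨B, hB⟩, _, h⟩
      exact ⟨B, hB, h⟩
    · rintro ⟨B, hB, h⟩
      exact ⟨⟨B, hB⟩, mem_attach _ _, h⟩
  have hfacts : ∀ B (hB : B ∈ σ), IsNCLOn B (f B hB) ∧
      (∀ τ, IsNCOn B τ → NCLle (f B hB) τ → B ∈ τ) := fun B hB =>
    mem_connSet.mp (hf B hB)
  have hsubB : ∀ B (hB : B ∈ σ), ∀ E ∈ f B hB, E ⊆ B := fun B hB E hE =>
    block_subset (hfacts B hB).1.2.1 hE
  have hNEf : ∀ B (hB : B ∈ σ), ∀ E ∈ f B hB, E.Nonempty := fun B hB =>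
    (hfacts B hB).1.1
  have hNCL : IsNCLOn (Finset.Icc 1 n) π := by
    refine ⟨?_, ?_, ?_⟩
    · intro E hE
      obtain ⟨B, hB, hEf⟩ := hmemπ.mp hE
      exact hNEf B hB E hEf
    · apply subset_antisymm
      · intro x hx
        obtain ⟨E, hE, hxE⟩ := mem_biUnion.mp hx
        obtain ⟨B, hB, hEf⟩ := hmemπ.mp hE
        exact block_subset hUσ hB (hsubB B hB E hEf hxE)
      · intro x hx
        rw [← hUσ] at hx
        obtain ⟨B, hB, hxB⟩ := mem_biUnion.mp hx
        obtain ⟨E, hE, hxE⟩ := exists_block (hfacts B hB).1.2.1 hxB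
        exact mem_biUnion.mpr ⟨E, hmemπ.mpr ⟨B, hB, hE⟩, hxE⟩
    · intro E hE F hF hne
      obtain ⟨B, hB, hEf⟩ := hmemπ.mp hE
      obtain ⟨B', hB', hFf⟩ := hmemπ.mp hF
      by_cases hBB' : B = B'
      · subst hBB'
        exact (hfacts B hB).1.2.2 E hEf F hFf hne
      · have hd := (hPWσ B hB B' hB' hBB').1
        constructor
        · intro hc
          exact (hPWσ B hB B' hB' hBB').2
            (crossing_mono (hsubB B hB E hEf) (hsubB B' hB' F hFf) hc)
        · intro i hi
          exfalso
          have h1 := (mem_inter.mp hi).1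
          have h2 := (mem_inter.mp hi).2
          exact disjoint_left.mp hd (hsubB B hB E hEf h1) (hsubB B' hB' F hFf h2)
  refine ⟨hNCL, ⟨hNEσ, hUσ, hPWσ⟩, ?_, ?_⟩
  · intro E hE
    obtain ⟨B, hB, hEf⟩ := hmemπ.mp hE
    exact ⟨B, hB, hsubB B hB E hEf⟩
  · intro τ hτ hleτ B hB
    obtain ⟨hNEτ, hUτ, hPWτ⟩ := hτ
    set τB := (τ.image (fun T => T ∩ B)).filter (fun A => A.Nonempty) with hτBdef
    have hτB : IsNCOn B τB := by
      refine ⟨?_, ?_, ?_⟩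
      · intro A hA
        exact (mem_filter.mp hA).2
      · apply subset_antisymm
        · intro x hx
          obtain ⟨A, hA, hxA⟩ := mem_biUnion.mp hx
          obtain ⟨T, _, rfl⟩ := mem_image.mp (mem_filter.mp hA).1
          exact (mem_inter.mp hxA).2
        · intro x hx
          have hxI : x ∈ Finset.Icc 1 n := block_subset hUσ hB hx
          obtain ⟨T, hT, hxT⟩ := exists_block hUτ hxI
          refine mem_biUnion.mpr ⟨T ∩ B, ?_, mem_inter.mpr ⟨hxT, hx⟩⟩
          exact mem_filter.mpr ⟨mem_image_of_mem _ hT, ⟨x, mem_inter.mpr ⟨hxT, hx⟩⟩⟩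
      · intro A hA A' hA' hne
        obtain ⟨T, hT, rfl⟩ := mem_image.mp (mem_filter.mp hA).1
        obtain ⟨T', hT', rfl⟩ := mem_image.mp (mem_filter.mp hA').1
        have hTT' : T ≠ T' := by rintro rfl; exact hne rfl
        exact ⟨((hPWτ T hT T' hT' hTT').1).mono inter_subset_left inter_subset_left,
          fun hc => (hPWτ T hT T' hT' hTT').2
            (crossing_mono inter_subset_left inter_subset_left hc)⟩
    have hleB : NCLle (f B hB) τB := by
      intro E hEf
      obtain ⟨T, hT, hET⟩ := hleτ E (hmemπ.mpr ⟨B, hB, hEf⟩)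
      have hsub : E ⊆ T ∩ B := fun x hx => mem_inter.mpr ⟨hET hx, hsubB B hB E hEf hx⟩
      refine ⟨T ∩ B, ?_, hsub⟩
      exact mem_filter.mpr ⟨mem_image_of_mem _ hT, (hNEf B hB E hEf).mono hsub⟩
    have hBτB := (hfacts B hB).2 τB hτB hleB
    obtain ⟨T, hT, hTB⟩ := mem_image.mp (mem_filter.mp hBτB).1
    exact ⟨T, hT, by rw [← hTB]; exact inter_subset_left⟩

end NCL

/-- For any noncrossing partition `σ` of `{1,...,n}`, the number of noncrossing
linked partitions `π` of `{1,...,n}` whose generated noncrossing partition is `σ`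
equals the product over the blocks `B ∈ σ` of the Catalan numbers `c_{|B|-1}`. -/
theorem card_NCL_generating (n : ℕ) (σ : Finset (Finset ℕ)) (hσ : IsNC n σ) :
    ((NCLset n).filter (fun π => GeneratesNC n π σ)).card
      = ∏ Bl ∈ σ, catalan (Bl.card - 1) := by
  classical
  have key : ((NCLset n).filter (fun π => GeneratesNC n π σ)).card
      = (σ.pi (fun B => NCL.connSet B)).card := by
    refine Finset.card_bij' (fun π _ => fun B _ => π.filter (fun E => E ⊆ B))
      (fun f _ => σ.attach.biUnion (fun b => f b.1 b.2)) ?_ ?_ ?_ ?_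
    · intro π hπ
      obtain ⟨hm, hgen⟩ := Finset.mem_filter.mp hπ
      have hNCL : NCL.IsNCLOn (Finset.Icc 1 n) π := (Finset.mem_filter.mp hm).2
      rw [Finset.mem_pi]
      intro B hB
      exact NCL.restrict_mem hσ hNCL hgen hB
    · intro f hf
      rw [Finset.mem_pi] at hf
      obtain ⟨hNCL, hgen⟩ := NCL.glue_mem hσ f hf
      exact Finset.mem_filter.mpr ⟨Finset.mem_filter.mpr
        ⟨NCL.mem_pp hNCL.2.1, hNCL⟩, hgen⟩
    · intro π hπ
      obtain ⟨hm, hgen⟩ := Finset.mem_filter.mp hπ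
      dsimp only
      ext E
      constructor
      · intro hE
        rw [Finset.mem_biUnion] at hE
        obtain ⟨b, _, hEb⟩ := hE
        exact (Finset.mem_filter.mp hEb).1
      · intro hE
        obtain ⟨B, hB, hEB⟩ := hgen.2.1 E hE
        exact Finset.mem_biUnion.mpr ⟨⟨B, hB⟩, Finset.mem_attach _ _,
          Finset.mem_filter.mpr ⟨hE, hEB⟩⟩
    · intro f hf
      rw [Finset.mem_pi] at hf
      funext B hB
      ext E
      constructor
      · intro hE
        obtain ⟨hEg, hEB⟩ := Finset.mem_filter.mp hE
        rw [Finset.mem_biUnion] at hEg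
        obtain ⟨⟨B', hB'⟩, _, hEb⟩ := hEg
        have hBB' : B' = B := by
          by_contra hne
          obtain ⟨x, hx⟩ := (NCL.mem_connSet.mp (hf B' hB')).1.1 E hEb
          have hxB' : x ∈ B' := NCL.block_subset
            (NCL.mem_connSet.mp (hf B' hB')).1.2.1 hEb hx
          exact Finset.disjoint_left.mp (hσ.2.2 B' hB' B hB hne).1 hxB' (hEB hx)
        subst hBB'
        exact hEb
      · intro hE
        refine Finset.mem_filter.mpr ⟨?_, NCL.block_subset
          (NCL.mem_connSet.mp (hf B hB)).1.2.1 hE⟩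
        exact Finset.mem_biUnion.mpr ⟨⟨B, hB⟩, Finset.mem_attach _ _, hE⟩
  rw [key, Finset.card_pi]
  exact Finset.prod_congr rfl fun B hB => NCL.conn_card (hσ.1 B hB)
end
end

section
/- If π and σ are noncrossing linked partitions of {1,...,n} with S_π = S_σ, then π = σ. Here S_π : {1,...,n} → ℕ_0 ⊔ ℕ_0* assigns to j the value 0* if j is not the minimum of any block of π; the value |F| - 1 (in ℕ_0) if j = min F for some F ∈ π and j lies in exactly one block of π; and the value (|F|-1)* (in ℕ_0*) if j = min F for some F ∈ π and j lies in exactly two blocks of π. -/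
attribute [local instance] Classical.propDecidable

noncomputable section

/-- The map `S_π : {1,...,n} → ℕ₀ ⊔ ℕ₀*`, where `ℕ₀` is encoded as the left and
`ℕ₀*` as the right summand of `ℕ ⊕ ℕ`:  `S_π(j) = 0*` if `j` is not the minimum
of any block of `π`; `S_π(j) = |F| - 1 ∈ ℕ₀` if `j = min F` for a block `F ∈ π`
and `j` lies in exactly one block of `π`; and `S_π(j) = (|F| - 1)* ∈ ℕ₀*` if
`j = min F` for a block `F ∈ π` and `j` lies in exactly two blocks of `π`. -/
def Spi (π : Finset (Finset ℕ)) (j : ℕ) : ℕ ⊕ ℕ :=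
  if ∃ F ∈ π, IsMinOf j F then
    if (π.filter (fun E => j ∈ E)).card = 1 then
      Sum.inl (((π.filter (fun F => IsMinOf j F)).sup Finset.card) - 1)
    else if (π.filter (fun E => j ∈ E)).card = 2 then
      Sum.inr (((π.filter (fun F => IsMinOf j F)).sup Finset.card) - 1)
    else Sum.inr 0
  else Sum.inr 0

section Aux

lemma minOf_unique {a b : ℕ} {E : Finset ℕ} (ha : IsMinOf a E) (hb : IsMinOf b E) : a = b :=
  le_antisymm (ha.2 b hb.1) (hb.2 a ha.1)

lemma mem_Icc_of_mem {n : ℕ} {π : Finset (Finset ℕ)} (hπ : IsNCL n π)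
    {E : Finset ℕ} (hE : E ∈ π) {x : ℕ} (hx : x ∈ E) : x ∈ Finset.Icc 1 n := by
  rw [← hπ.2.1]
  exact Finset.mem_biUnion.mpr ⟨E, hE, hx⟩

lemma block_unique {n : ℕ} {π : Finset (Finset ℕ)} (hπ : IsNCL n π)
    {E F : Finset ℕ} (hE : E ∈ π) (hF : F ∈ π)
    {j : ℕ} (hjE : IsMinOf j E) (hjF : IsMinOf j F) : E = F := by
  by_contra hne
  rcases (hπ.2.2 E hE F hF hne).2 j (Finset.mem_inter.mpr ⟨hjE.1, hjF.1⟩) with h | h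
  · exact h.2.2 hjF
  · exact h.1 hjE

lemma noCross {n : ℕ} {π : Finset (Finset ℕ)} (hπ : IsNCL n π)
    {E F : Finset ℕ} (hE : E ∈ π) (hF : F ∈ π)
    {a b c d : ℕ} (haE : a ∈ E) (hcE : c ∈ E) (hbF : b ∈ F) (hdF : d ∈ F)
    (h1 : a < b) (h2 : b < c) (h3 : c < d) : E = F := by
  by_contra hne
  exact (hπ.2.2 E hE F hF hne).1 ⟨a, haE, c, hcE, b, hbF, d, hdF, h1, h2, h3⟩

/-- `e` is attached to `m`: `e` is a non-minimal member of the block with minimum `m`. -/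
def Att (π : Finset (Finset ℕ)) (m e : ℕ) : Prop :=
  ∃ E ∈ π, IsMinOf m E ∧ e ∈ E ∧ m ≠ e

lemma att_lt {π : Finset (Finset ℕ)} {m e : ℕ} (h : Att π m e) : m < e := by
  obtain ⟨E, _, hm, he, hne⟩ := h
  exact lt_of_le_of_ne (hm.2 e he) hne

lemma exists_isMinOf {E : Finset ℕ} (h : E.Nonempty) : ∃ m ∈ E, IsMinOf m E :=
  ⟨E.min' h, E.min'_mem h, E.min'_mem h, fun j hj => E.min'_le j hj⟩

lemma card_filter_mem_le_two {n : ℕ} {π : Finset (Finset ℕ)} (hπ : IsNCL n π) (e : ℕ) :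
    (π.filter (fun E => e ∈ E)).card ≤ 2 := by
  by_contra hlt
  push_neg at hlt
  obtain ⟨E, hE, F, hF, G, hG, hEF, hEG, hFG⟩ := Finset.two_lt_card.mp hlt
  simp only [Finset.mem_filter] at hE hF hG
  have h1 := (hπ.2.2 E hE.1 F hF.1 hEF).2 e (Finset.mem_inter.mpr ⟨hE.2, hF.2⟩)
  have h2 := (hπ.2.2 E hE.1 G hG.1 hEG).2 e (Finset.mem_inter.mpr ⟨hE.2, hG.2⟩)
  have h3 := (hπ.2.2 F hF.1 G hG.1 hFG).2 e (Finset.mem_inter.mpr ⟨hF.2, hG.2⟩)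
  tauto

lemma card_cases {n : ℕ} {π : Finset (Finset ℕ)} (hπ : IsNCL n π)
    {E : Finset ℕ} {e : ℕ} (hE : E ∈ π) (he : e ∈ E) :
    (π.filter (fun F => e ∈ F)).card = 1 ∨ (π.filter (fun F => e ∈ F)).card = 2 := by
  have h1 : 0 < (π.filter (fun F => e ∈ F)).card :=
    Finset.card_pos.mpr ⟨E, Finset.mem_filter.mpr ⟨hE, he⟩⟩
  have h2 := card_filter_mem_le_two hπ e
  omega

lemma min_filter_eq {n : ℕ} {π : Finset (Finset ℕ)} (hπ : IsNCL n π)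
    {E : Finset ℕ} {e : ℕ} (hE : E ∈ π) (hm : IsMinOf e E) :
    π.filter (fun F => IsMinOf e F) = {E} := by
  ext F
  simp only [Finset.mem_filter, Finset.mem_singleton]
  constructor
  · rintro ⟨hF, hmF⟩; exact block_unique hπ hF hE hmF hm
  · rintro rfl; exact ⟨hE, hm⟩

lemma spi_min1 {n : ℕ} {π : Finset (Finset ℕ)} (hπ : IsNCL n π)
    {E : Finset ℕ} {e : ℕ} (hE : E ∈ π) (hm : IsMinOf e E)
    (hc : (π.filter (fun F => e ∈ F)).card = 1) :
    Spi π e = Sum.inl (E.card - 1) := by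
  have hex : ∃ F ∈ π, IsMinOf e F := ⟨E, hE, hm⟩
  unfold Spi
  rw [if_pos hex, if_pos hc, min_filter_eq hπ hE hm, Finset.sup_singleton]

lemma spi_min2 {n : ℕ} {π : Finset (Finset ℕ)} (hπ : IsNCL n π)
    {E : Finset ℕ} {e : ℕ} (hE : E ∈ π) (hm : IsMinOf e E)
    (hc : (π.filter (fun F => e ∈ F)).card = 2) :
    Spi π e = Sum.inr (E.card - 1) ∧ 2 ≤ E.card := by
  have hex : ∃ F ∈ π, IsMinOf e F := ⟨E, hE, hm⟩
  have hne1 : ¬ (π.filter (fun F => e ∈ F)).card = 1 := by omega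
  constructor
  · unfold Spi
    rw [if_pos hex, if_neg hne1, if_pos hc, min_filter_eq hπ hE hm, Finset.sup_singleton]
  · have hEf : E ∈ π.filter (fun F => e ∈ F) := Finset.mem_filter.mpr ⟨hE, hm.1⟩
    have hnon : ((π.filter (fun F => e ∈ F)).erase E).Nonempty := by
      rw [← Finset.card_pos, Finset.card_erase_of_mem hEf, hc]
      norm_num
    obtain ⟨F, hF⟩ := hnon
    have hFne : F ≠ E := (Finset.mem_erase.mp hF).1
    have hFf := Finset.mem_filter.mp (Finset.mem_erase.mp hF).2
    rcases (hπ.2.2 E hE F hFf.1 (Ne.symm hFne)).2 e (Finset.mem_inter.mpr ⟨hm.1, hFf.2⟩) with hh | hh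
    · omega
    · exact absurd hm hh.1

lemma spi_notmin {π : Finset (Finset ℕ)} {e : ℕ} (hnm : ¬∃ F ∈ π, IsMinOf e F) :
    Spi π e = Sum.inr 0 := by
  unfold Spi
  rw [if_neg hnm]

lemma spi_inr0_iff {n : ℕ} {π : Finset (Finset ℕ)} (hπ : IsNCL n π) (e : ℕ) :
    Spi π e = Sum.inr 0 ↔ ¬∃ F ∈ π, IsMinOf e F := by
  constructor
  · intro hs hex
    obtain ⟨E, hE, hm⟩ := hex
    rcases card_cases hπ hE hm.1 with hc | hc
    · rw [spi_min1 hπ hE hm hc] at hs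
      cases hs
    · obtain ⟨hs2, hcard⟩ := spi_min2 hπ hE hm hc
      rw [hs2] at hs
      have := Sum.inr.inj hs
      omega
  · exact spi_notmin

lemma exists_att_of_not_min {n : ℕ} {π : Finset (Finset ℕ)} (hπ : IsNCL n π)
    {e : ℕ} (he : e ∈ Finset.Icc 1 n)
    (hnm : ¬∃ F ∈ π, IsMinOf e F) : ∃ m, Att π m e := by
  have hmem : e ∈ π.biUnion id := by rw [hπ.2.1]; exact he
  obtain ⟨E, hE, heE⟩ := Finset.mem_biUnion.mp hmem
  obtain ⟨m, _, hm⟩ := exists_isMinOf (hπ.1 E hE)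
  refine ⟨m, E, hE, hm, heE, ?_⟩
  rintro rfl
  exact hnm ⟨E, hE, hm⟩

lemma isMin_transfer {n : ℕ} {π σ : Finset (Finset ℕ)} (hπ : IsNCL n π) (hσ : IsNCL n σ)
    {e : ℕ} (hS : Spi π e = Spi σ e) :
    (∃ F ∈ π, IsMinOf e F) ↔ (∃ F ∈ σ, IsMinOf e F) := by
  rw [← not_iff_not, ← spi_inr0_iff hπ, ← spi_inr0_iff hσ, hS]

lemma card_eq_of_min {n : ℕ} {π σ : Finset (Finset ℕ)} (hπ : IsNCL n π) (hσ : IsNCL n σ)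
    {e : ℕ} (hS : Spi π e = Spi σ e) {E E' : Finset ℕ} (hE : E ∈ π) (hm : IsMinOf e E)
    (hE' : E' ∈ σ) (hm' : IsMinOf e E') : E.card = E'.card := by
  have c1 : 1 ≤ E.card := Finset.card_pos.mpr ⟨e, hm.1⟩
  have c1' : 1 ≤ E'.card := Finset.card_pos.mpr ⟨e, hm'.1⟩
  rcases card_cases hπ hE hm.1 with hc | hc <;> rcases card_cases hσ hE' hm'.1 with hc' | hc'
  · rw [spi_min1 hπ hE hm hc, spi_min1 hσ hE' hm' hc'] at hS
    have := Sum.inl.inj hS; omega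
  · rw [spi_min1 hπ hE hm hc, (spi_min2 hσ hE' hm' hc').1] at hS
    cases hS
  · rw [(spi_min2 hπ hE hm hc).1, spi_min1 hσ hE' hm' hc'] at hS
    cases hS
  · rw [(spi_min2 hπ hE hm hc).1, (spi_min2 hσ hE' hm' hc').1] at hS
    have := Sum.inr.inj hS; omega

lemma spi_isRight_iff {n : ℕ} {π : Finset (Finset ℕ)} (hπ : IsNCL n π) {e : ℕ}
    (he : e ∈ Finset.Icc 1 n) : (Spi π e).isRight = true ↔ ∃ m, Att π m e := by
  by_cases hex : ∃ F ∈ π, IsMinOf e F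
  · obtain ⟨E, hE, hm⟩ := hex
    rcases card_cases hπ hE hm.1 with hc | hc
    · rw [spi_min1 hπ hE hm hc]
      simp only [Sum.isRight_inl, Bool.false_eq_true, false_iff]
      rintro ⟨m, F, hF, hmF, heF, hne⟩
      have hFE : F ≠ E := by
        rintro rfl
        exact hne (minOf_unique hmF hm)
      have : 1 < (π.filter (fun G => e ∈ G)).card :=
        Finset.one_lt_card.mpr
          ⟨F, Finset.mem_filter.mpr ⟨hF, heF⟩, E, Finset.mem_filter.mpr ⟨hE, hm.1⟩, hFE⟩
      omega
    · rw [(spi_min2 hπ hE hm hc).1]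
      simp only [Sum.isRight_inr, true_iff]
      have hEf : E ∈ π.filter (fun G => e ∈ G) := Finset.mem_filter.mpr ⟨hE, hm.1⟩
      have hnon : ((π.filter (fun G => e ∈ G)).erase E).Nonempty := by
        rw [← Finset.card_pos, Finset.card_erase_of_mem hEf, hc]
        norm_num
      obtain ⟨F, hF⟩ := hnon
      have hFne : F ≠ E := (Finset.mem_erase.mp hF).1
      have hFf := Finset.mem_filter.mp (Finset.mem_erase.mp hF).2
      obtain ⟨m', hm'F, hm'⟩ := exists_isMinOf (hπ.1 F hFf.1)
      refine ⟨m', F, hFf.1, hm', hFf.2, ?_⟩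
      rintro rfl
      exact hFne (block_unique hπ hFf.1 hE hm' hm)
  · rw [spi_notmin hex]
    simp only [Sum.isRight_inr, true_iff]
    exact exists_att_of_not_min hπ he hex

lemma open_le {n : ℕ} {σ : Finset (Finset ℕ)} (hσ : IsNCL n σ) {m' m₂ e : ℕ}
    (hA : Att σ m₂ e) (hO : ∃ E ∈ σ, IsMinOf m' E ∧ ∃ d ∈ E, e ≤ d)
    (hlt : m' < e) : m' ≤ m₂ := by
  obtain ⟨E, hE, hm₂, heE, hne⟩ := hA
  obtain ⟨E', hE', hm', d, hdE', hed⟩ := hO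
  by_contra hgt
  push_neg at hgt
  have hm2e : m₂ < e := lt_of_le_of_ne (hm₂.2 e heE) hne
  have hEne : E ≠ E' := by
    rintro rfl
    exact absurd (minOf_unique hm₂ hm') (Nat.ne_of_lt hgt)
  rcases eq_or_lt_of_le hed with heq | hdlt
  · subst heq
    rcases (hσ.2.2 E hE E' hE' hEne).2 e (Finset.mem_inter.mpr ⟨heE, hdE'⟩) with hh | hh
    · have := minOf_unique hh.1 hm₂; omega
    · have := minOf_unique hh.2.1 hm'; omega
  · exact hEne (noCross hσ hE hE' hm₂.1 heE hm'.1 hdE' hgt hlt hdlt)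

lemma open_of {n : ℕ} {π σ : Finset (Finset ℕ)} (hπ : IsNCL n π) (hσ : IsNCL n σ)
    (h : ∀ j ∈ Finset.Icc 1 n, Spi π j = Spi σ j)
    {e m₁ : ℕ} (IH : ∀ x, x < e → ∀ m, Att σ m x → Att π m x)
    (hA : Att π m₁ e) :
    ∃ E' ∈ σ, IsMinOf m₁ E' ∧ ∃ d ∈ E', e ≤ d := by
  obtain ⟨E, hE, hm, heE, hne⟩ := hA
  have hm1Icc : m₁ ∈ Finset.Icc 1 n := mem_Icc_of_mem hπ hE hm.1
  obtain ⟨E', hE', hm'⟩ := (isMin_transfer hπ hσ (h m₁ hm1Icc)).mp ⟨E, hE, hm⟩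
  refine ⟨E', hE', hm', ?_⟩
  by_contra hno
  push_neg at hno
  have hsub : E' ⊆ E := by
    intro x hx
    by_cases hxm : x = m₁
    · exact hxm ▸ hm.1
    · have hAx : Att σ m₁ x := ⟨E', hE', hm', hx, Ne.symm hxm⟩
      obtain ⟨F, hF, hmF, hxF, _⟩ := IH x (hno x hx) m₁ hAx
      rwa [block_unique hπ hF hE hmF hm] at hxF
  have hss : E' ⊂ E :=
    (Finset.ssubset_iff_of_subset hsub).mpr ⟨e, heE, fun hc => lt_irrefl e (hno e hc)⟩
  have hlt := Finset.card_lt_card hss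
  have hce := card_eq_of_min hπ hσ (h m₁ hm1Icc) hE hm hE' hm'
  omega

lemma att_iff {n : ℕ} {π σ : Finset (Finset ℕ)} (hπ : IsNCL n π) (hσ : IsNCL n σ)
    (h : ∀ j ∈ Finset.Icc 1 n, Spi π j = Spi σ j) :
    ∀ e m, Att π m e ↔ Att σ m e := by
  intro e
  induction e using Nat.strong_induction_on with
  | _ e IH =>
    have key : ∀ (τ ρ : Finset (Finset ℕ)), IsNCL n τ → IsNCL n ρ →
        (∀ j ∈ Finset.Icc 1 n, Spi τ j = Spi ρ j) →
        (∀ x, x < e → ∀ m, (Att τ m x ↔ Att ρ m x)) →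
        ∀ m₁, Att τ m₁ e → Att ρ m₁ e := by
      intro τ ρ hτ hρ hS IH2 m₁ hA
      have heIcc : e ∈ Finset.Icc 1 n := by
        obtain ⟨E, hE, _, heE, _⟩ := hA
        exact mem_Icc_of_mem hτ hE heE
      have hR : (Spi ρ e).isRight = true := by
        rw [← hS e heIcc]
        exact (spi_isRight_iff hτ heIcc).mpr ⟨m₁, hA⟩
      obtain ⟨m₂, hA₂⟩ := (spi_isRight_iff hρ heIcc).mp hR
      have h1 : m₁ ≤ m₂ :=
        open_le hρ hA₂ (open_of hτ hρ hS (fun x hx m hAx => (IH2 x hx m).mpr hAx) hA)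
          (att_lt hA)
      have h2 : m₂ ≤ m₁ :=
        open_le hτ hA (open_of hρ hτ (fun j hj => (hS j hj).symm)
          (fun x hx m hAx => (IH2 x hx m).mp hAx) hA₂) (att_lt hA₂)
      have hm12 : m₁ = m₂ := le_antisymm h1 h2
      exact hm12 ▸ hA₂
    intro m
    constructor
    · exact key π σ hπ hσ h (fun x hx m => IH x hx m) m
    · exact key σ π hσ hπ (fun j hj => (h j hj).symm) (fun x hx m => (IH x hx m).symm) m

lemma NCL_subset_of {n : ℕ} {π σ : Finset (Finset ℕ)} (hπ : IsNCL n π) (hσ : IsNCL n σ)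
    (h : ∀ j ∈ Finset.Icc 1 n, Spi π j = Spi σ j) : π ⊆ σ := by
  intro E hE
  obtain ⟨m, hmE, hm⟩ := exists_isMinOf (hπ.1 E hE)
  have hmIcc := mem_Icc_of_mem hπ hE hmE
  obtain ⟨E', hE', hm'⟩ := (isMin_transfer hπ hσ (h m hmIcc)).mp ⟨E, hE, hm⟩
  have hsub : E ⊆ E' := by
    intro x hx
    by_cases hxm : x = m
    · exact hxm ▸ hm'.1
    · have hAx : Att σ m x := (att_iff hπ hσ h x m).mp ⟨E, hE, hm, hx, Ne.symm hxm⟩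
      obtain ⟨F, hF, hmF, hxF, _⟩ := hAx
      rwa [block_unique hσ hF hE' hmF hm'] at hxF
  have hce := card_eq_of_min hπ hσ (h m hmIcc) hE hm hE' hm'
  have hEE : E = E' := Finset.eq_of_subset_of_card_le hsub (le_of_eq hce.symm)
  exact hEE ▸ hE'

end Aux

/-- If two noncrossing linked partitions `π`, `σ` of `{1,...,n}` satisfy
`S_π = S_σ`, then `π = σ`. -/
theorem NCL_Spi_injective {n : ℕ} {π σ : Finset (Finset ℕ)}
    (hπ : IsNCL n π) (hσ : IsNCL n σ)
    (h : ∀ j ∈ Finset.Icc 1 n, Spi π j = Spi σ j) : π = σ :=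
  Finset.Subset.antisymm (NCL_subset_of hπ hσ h)
    (NCL_subset_of hσ hπ (fun j hj => (h j hj).symm))
end
end

section
/- For n ≥ 4, the partially ordered set NCL(n) under the containment order ≤ (π ≤ σ iff every block of π is contained in some block of σ) is not a lattice: there exist π, σ ∈ NCL(n) with no least upper bound. -/
attribute [local instance] Classical.propDecidable

noncomputable section

lemma not_crossing_left (i : ℕ) (F : Finset ℕ) : ¬ Crossing {i} F := by
  rintro ⟨i₁, h₁, i₂, h₂, j₁, _, j₂, _, l1, l2, l3⟩
  simp only [Finset.mem_singleton] at h₁ h₂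
  omega

lemma not_crossing_right (E : Finset ℕ) (j : ℕ) : ¬ Crossing E {j} := by
  rintro ⟨i₁, _, i₂, _, j₁, h₁, j₂, h₂, l1, l2, l3⟩
  simp only [Finset.mem_singleton] at h₁ h₂
  omega

lemma nd_of_disjoint {E F : Finset ℕ} (h : Disjoint E F) : NearlyDisjoint E F := by
  intro i hi
  rw [Finset.disjoint_iff_inter_eq_empty] at h
  simp [h] at hi

def part (B : Finset (Finset ℕ)) (n : ℕ) : Finset (Finset ℕ) :=
  B ∪ ((Finset.Icc 1 n \ B.biUnion id).image fun i => ({i} : Finset ℕ))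

lemma mem_part {B : Finset (Finset ℕ)} {n : ℕ} {E : Finset ℕ} :
    E ∈ part B n ↔ E ∈ B ∨ ∃ i, (i ∈ Finset.Icc 1 n ∧ i ∉ B.biUnion id) ∧ E = {i} := by
  simp only [part, Finset.mem_union, Finset.mem_image, Finset.mem_sdiff]
  constructor
  · rintro (h | ⟨i, hi, rfl⟩)
    · exact Or.inl h
    · exact Or.inr ⟨i, hi, rfl⟩
  · rintro (h | ⟨i, hi, rfl⟩)
    · exact Or.inl h
    · exact Or.inr ⟨i, hi, rfl⟩

lemma part_isNCL {B : Finset (Finset ℕ)} {n : ℕ}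
    (hB : ∀ E ∈ B, E.Nonempty) (hsub : B.biUnion id ⊆ Finset.Icc 1 n)
    (hpair : ∀ E ∈ B, ∀ F ∈ B, E ≠ F → ¬ Crossing E F ∧ NearlyDisjoint E F) :
    IsNCL n (part B n) := by
  refine ⟨?_, ?_, ?_⟩
  · intro E hE
    rcases mem_part.1 hE with h | ⟨i, _, rfl⟩
    · exact hB E h
    · exact ⟨i, Finset.mem_singleton_self i⟩
  · ext x
    simp only [Finset.mem_biUnion, id]
    constructor
    · rintro ⟨E, hE, hx⟩
      rcases mem_part.1 hE with h | ⟨i, ⟨hi1, _⟩, rfl⟩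
      · exact hsub (Finset.mem_biUnion.2 ⟨E, h, hx⟩)
      · rwa [Finset.mem_singleton.1 hx]
    · intro hx
      by_cases h : x ∈ B.biUnion id
      · rcases Finset.mem_biUnion.1 h with ⟨E, hE, hx'⟩
        exact ⟨E, mem_part.2 (Or.inl hE), hx'⟩
      · exact ⟨{x}, mem_part.2 (Or.inr ⟨x, ⟨hx, h⟩, rfl⟩), Finset.mem_singleton_self x⟩
  · intro E hE F hF hne
    rcases mem_part.1 hE with hEB | ⟨i, ⟨hi1, hi2⟩, rfl⟩
    · rcases mem_part.1 hF with hFB | ⟨j, ⟨hj1, hj2⟩, rfl⟩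
      · exact hpair E hEB F hFB hne
      · have hd : Disjoint E ({j} : Finset ℕ) := by
          simp only [Finset.disjoint_singleton_right]
          exact fun hjE => hj2 (Finset.mem_biUnion.2 ⟨E, hEB, hjE⟩)
        exact ⟨not_crossing_right _ _, nd_of_disjoint hd⟩
    · rcases mem_part.1 hF with hFB | ⟨j, ⟨hj1, hj2⟩, rfl⟩
      · have hd : Disjoint ({i} : Finset ℕ) F := by
          simp only [Finset.disjoint_singleton_left]
          exact fun hiF => hi2 (Finset.mem_biUnion.2 ⟨F, hFB, hiF⟩)
        exact ⟨not_crossing_left _ _, nd_of_disjoint hd⟩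
      · have hij : i ≠ j := fun h => hne (by rw [h])
        exact ⟨not_crossing_left _ _, nd_of_disjoint (by simpa using hij)⟩

lemma min23 : IsMinOf 2 ({2,3} : Finset ℕ) :=
  ⟨by simp, by intro j hj; simp at hj; omega⟩

lemma min24 : IsMinOf 2 ({2,4} : Finset ℕ) :=
  ⟨by simp, by intro j hj; simp at hj; omega⟩

lemma not_nd : ¬ NearlyDisjoint ({2,3} : Finset ℕ) ({2,4} : Finset ℕ) := by
  intro h
  have h2 : (2 : ℕ) ∈ ({2,3} : Finset ℕ) ∩ ({2,4} : Finset ℕ) := by simp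
  rcases h 2 h2 with ⟨_, _, h3⟩ | ⟨h1, _, _⟩
  · exact h3 min24
  · exact h1 min23

lemma nc_tau2 : ¬ Crossing ({1,2,4} : Finset ℕ) ({2,3} : Finset ℕ) := by
  rintro ⟨i₁, h₁, i₂, h₂, j₁, hj₁, j₂, hj₂, l⟩
  simp only [Finset.mem_insert, Finset.mem_singleton] at h₁ h₂ hj₁ hj₂
  omega

lemma nc_tau2' : ¬ Crossing ({2,3} : Finset ℕ) ({1,2,4} : Finset ℕ) := by
  rintro ⟨i₁, h₁, i₂, h₂, j₁, hj₁, j₂, hj₂, l⟩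
  simp only [Finset.mem_insert, Finset.mem_singleton] at h₁ h₂ hj₁ hj₂
  omega

lemma card23 : (1 : ℕ) < ({2,3} : Finset ℕ).card := by
  rw [show ({2,3} : Finset ℕ) = insert 2 {3} from rfl,
    Finset.card_insert_of_notMem (by simp), Finset.card_singleton]
  omega

lemma not_min2_124 : ¬ IsMinOf 2 ({1,2,4} : Finset ℕ) := by
  rintro ⟨_, h⟩
  have := h 1 (by simp)
  omega

lemma nd_tau2 : NearlyDisjoint ({1,2,4} : Finset ℕ) ({2,3} : Finset ℕ) := by
  intro i hi
  simp only [Finset.mem_inter, Finset.mem_insert, Finset.mem_singleton] at hi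
  have : i = 2 := by omega
  subst this
  exact Or.inr ⟨not_min2_124, min23, card23⟩

lemma nd_tau2' : NearlyDisjoint ({2,3} : Finset ℕ) ({1,2,4} : Finset ℕ) := by
  intro i hi
  simp only [Finset.mem_inter, Finset.mem_insert, Finset.mem_singleton] at hi
  have : i = 2 := by omega
  subst this
  exact Or.inl ⟨min23, card23, not_min2_124⟩

/-- For `n ≥ 4`, the poset of noncrossing linked partitions of `{1,...,n}` under
the containment order is not a lattice: there are two elements admitting no least
upper bound. -/
theorem NCL_not_lattice (n : ℕ) (hn : 4 ≤ n) :
    ∃ π σ : Finset (Finset ℕ), IsNCL n π ∧ IsNCL n σ ∧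
      ¬ ∃ ρ : Finset (Finset ℕ), IsNCL n ρ ∧ NCLle π ρ ∧ NCLle σ ρ ∧
        ∀ τ : Finset (Finset ℕ), IsNCL n τ → NCLle π τ → NCLle σ τ → NCLle ρ τ := by
  -- the four partitions
  set π := part {{2,3}} n with hπdef
  set σ := part {{2,4}} n with hσdef
  set τ₁ := part {{2,3,4}} n with hτ₁def
  set τ₂ := part {({1,2,4} : Finset ℕ), {2,3}} n with hτ₂def
  have hIcc : ∀ m : ℕ, 1 ≤ m → m ≤ 4 → m ∈ Finset.Icc 1 n := by
    intro m h1 h2; rw [Finset.mem_Icc]; omega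
  have hπ : IsNCL n π := by
    apply part_isNCL
    · intro E hE; rw [Finset.mem_singleton] at hE; subst hE; exact ⟨2, by simp⟩
    · intro x hx
      simp only [Finset.singleton_biUnion, id, Finset.mem_insert, Finset.mem_singleton] at hx
      exact hIcc x (by omega) (by omega)
    · intro E hE F hF hne
      rw [Finset.mem_singleton] at hE hF
      exact absurd (hE.trans hF.symm) hne
  have hσ : IsNCL n σ := by
    apply part_isNCL
    · intro E hE; rw [Finset.mem_singleton] at hE; subst hE; exact ⟨2, by simp⟩
    · intro x hx
      simp only [Finset.singleton_biUnion, id, Finset.mem_insert, Finset.mem_singleton] at hx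
      exact hIcc x (by omega) (by omega)
    · intro E hE F hF hne
      rw [Finset.mem_singleton] at hE hF
      exact absurd (hE.trans hF.symm) hne
  have hτ₁ : IsNCL n τ₁ := by
    apply part_isNCL
    · intro E hE; rw [Finset.mem_singleton] at hE; subst hE; exact ⟨2, by simp⟩
    · intro x hx
      simp only [Finset.singleton_biUnion, id, Finset.mem_insert, Finset.mem_singleton] at hx
      exact hIcc x (by omega) (by omega)
    · intro E hE F hF hne
      rw [Finset.mem_singleton] at hE hF
      exact absurd (hE.trans hF.symm) hne
  have hτ₂ : IsNCL n τ₂ := by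
    apply part_isNCL
    · intro E hE
      rcases Finset.mem_insert.1 hE with rfl | hE
      · exact ⟨1, by simp⟩
      · rw [Finset.mem_singleton] at hE; subst hE; exact ⟨2, by simp⟩
    · intro x hx
      simp only [Finset.mem_biUnion, id, Finset.mem_insert, Finset.mem_singleton] at hx
      obtain ⟨E, hE, hx⟩ := hx
      rcases hE with rfl | rfl <;> simp at hx <;> exact hIcc x (by omega) (by omega)
    · intro E hE F hF hne
      rcases Finset.mem_insert.1 hE with rfl | hE
      · rcases Finset.mem_insert.1 hF with rfl | hF
        · exact absurd rfl hne
        · rw [Finset.mem_singleton] at hF; subst hF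
          exact ⟨nc_tau2, nd_tau2⟩
      · rw [Finset.mem_singleton] at hE; subst hE
        rcases Finset.mem_insert.1 hF with rfl | hF
        · exact ⟨nc_tau2', nd_tau2'⟩
        · rw [Finset.mem_singleton] at hF; subst hF
          exact absurd rfl hne
  -- membership facts
  have h23π : ({2,3} : Finset ℕ) ∈ π := mem_part.2 (Or.inl (Finset.mem_singleton_self _))
  have h24σ : ({2,4} : Finset ℕ) ∈ σ := mem_part.2 (Or.inl (Finset.mem_singleton_self _))
  -- upper bound facts
  have hπτ₁ : NCLle π τ₁ := by
    intro E hE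
    rcases mem_part.1 hE with hEB | ⟨i, ⟨hi1, hi2⟩, rfl⟩
    · rw [Finset.mem_singleton] at hEB; subst hEB
      exact ⟨{2,3,4}, mem_part.2 (Or.inl (Finset.mem_singleton_self _)),
        by intro x hx; simp at hx ⊢; omega⟩
    · simp only [Finset.singleton_biUnion, id, Finset.mem_insert, Finset.mem_singleton] at hi2
      by_cases h4 : i = 4
      · subst h4
        exact ⟨{2,3,4}, mem_part.2 (Or.inl (Finset.mem_singleton_self _)), by simp⟩
      · refine ⟨{i}, mem_part.2 (Or.inr ⟨i, ⟨hi1, ?_⟩, rfl⟩), subset_rfl⟩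
        simp only [Finset.singleton_biUnion, id, Finset.mem_insert, Finset.mem_singleton]
        omega
  have hστ₁ : NCLle σ τ₁ := by
    intro E hE
    rcases mem_part.1 hE with hEB | ⟨i, ⟨hi1, hi2⟩, rfl⟩
    · rw [Finset.mem_singleton] at hEB; subst hEB
      exact ⟨{2,3,4}, mem_part.2 (Or.inl (Finset.mem_singleton_self _)),
        by intro x hx; simp at hx ⊢; omega⟩
    · simp only [Finset.singleton_biUnion, id, Finset.mem_insert, Finset.mem_singleton] at hi2
      by_cases h3 : i = 3
      · subst h3
        exact ⟨{2,3,4}, mem_part.2 (Or.inl (Finset.mem_singleton_self _)), by simp⟩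
      · refine ⟨{i}, mem_part.2 (Or.inr ⟨i, ⟨hi1, ?_⟩, rfl⟩), subset_rfl⟩
        simp only [Finset.singleton_biUnion, id, Finset.mem_insert, Finset.mem_singleton]
        omega
  have hbiu2 : ∀ i : ℕ, i ∈ (({({1,2,4} : Finset ℕ), {2,3}} : Finset (Finset ℕ)).biUnion id)
      ↔ (i = 1 ∨ i = 2 ∨ i = 3 ∨ i = 4) := by
    intro i
    simp only [Finset.mem_biUnion, id, Finset.mem_insert, Finset.mem_singleton]
    constructor
    · rintro ⟨E, hE, hx⟩
      rcases hE with rfl | rfl <;> simp at hx <;> omega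
    · intro h
      rcases h with rfl | rfl | rfl | rfl
      · exact ⟨{1,2,4}, Or.inl rfl, by simp⟩
      · exact ⟨{1,2,4}, Or.inl rfl, by simp⟩
      · exact ⟨{2,3}, Or.inr rfl, by simp⟩
      · exact ⟨{1,2,4}, Or.inl rfl, by simp⟩
  have hπτ₂ : NCLle π τ₂ := by
    intro E hE
    rcases mem_part.1 hE with hEB | ⟨i, ⟨hi1, hi2⟩, rfl⟩
    · rw [Finset.mem_singleton] at hEB; subst hEB
      exact ⟨{2,3}, mem_part.2 (Or.inl (Finset.mem_insert.2 (Or.inr (Finset.mem_singleton_self _)))),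
        subset_rfl⟩
    · simp only [Finset.singleton_biUnion, id, Finset.mem_insert, Finset.mem_singleton] at hi2
      by_cases h14 : i = 1 ∨ i = 4
      · refine ⟨{1,2,4}, mem_part.2 (Or.inl (Finset.mem_insert.2 (Or.inl rfl))), ?_⟩
        rcases h14 with rfl | rfl <;> simp
      · refine ⟨{i}, mem_part.2 (Or.inr ⟨i, ⟨hi1, ?_⟩, rfl⟩), subset_rfl⟩
        rw [hbiu2]; omega
  have hστ₂ : NCLle σ τ₂ := by
    intro E hE
    rcases mem_part.1 hE with hEB | ⟨i, ⟨hi1, hi2⟩, rfl⟩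
    · rw [Finset.mem_singleton] at hEB; subst hEB
      exact ⟨{1,2,4}, mem_part.2 (Or.inl (Finset.mem_insert.2 (Or.inl rfl))),
        by intro x hx; simp at hx ⊢; omega⟩
    · simp only [Finset.singleton_biUnion, id, Finset.mem_insert, Finset.mem_singleton] at hi2
      by_cases h1 : i = 1
      · subst h1
        exact ⟨{1,2,4}, mem_part.2 (Or.inl (Finset.mem_insert.2 (Or.inl rfl))), by simp⟩
      · by_cases h3 : i = 3
        · subst h3
          exact ⟨{2,3}, mem_part.2 (Or.inl (Finset.mem_insert.2
            (Or.inr (Finset.mem_singleton_self _)))), by simp⟩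
        · refine ⟨{i}, mem_part.2 (Or.inr ⟨i, ⟨hi1, ?_⟩, rfl⟩), subset_rfl⟩
          rw [hbiu2]; omega
  refine ⟨π, σ, hπ, hσ, ?_⟩
  rintro ⟨ρ, hρ, hπρ, hσρ, hleast⟩
  obtain ⟨E₁, hE₁ρ, hE₁⟩ := hπρ {2,3} h23π
  obtain ⟨E₂, hE₂ρ, hE₂⟩ := hσρ {2,4} h24σ
  have hρτ₁ : NCLle ρ τ₁ := hleast τ₁ hτ₁ hπτ₁ hστ₁
  have hρτ₂ : NCLle ρ τ₂ := hleast τ₂ hτ₂ hπτ₂ hστ₂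
  have h2E₁ : (2 : ℕ) ∈ E₁ := hE₁ (by simp)
  have h3E₁ : (3 : ℕ) ∈ E₁ := hE₁ (by simp)
  have h2E₂ : (2 : ℕ) ∈ E₂ := hE₂ (by simp)
  have h4E₂ : (4 : ℕ) ∈ E₂ := hE₂ (by simp)
  -- E₁ ⊆ {2,3,4}, E₂ ⊆ {2,3,4}
  have hsub₁ : ∀ E ∈ ρ, (2:ℕ) ∈ E → E ⊆ {2,3,4} := by
    intro E hEρ h2E
    obtain ⟨A, hA, hEA⟩ := hρτ₁ E hEρ
    rcases mem_part.1 hA with hAB | ⟨i, ⟨_, hi2⟩, rfl⟩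
    · rwa [Finset.mem_singleton.1 hAB] at hEA
    · exfalso
      have : (2:ℕ) ∈ ({i} : Finset ℕ) := hEA h2E
      rw [Finset.mem_singleton] at this
      subst this
      exact hi2 (Finset.mem_biUnion.2 ⟨{2,3,4}, Finset.mem_singleton_self _, by simp⟩)
  -- block of τ₂ containing E₁ (contains 3) must be {2,3}
  have hE₁23 : E₁ = {2,3} := by
    obtain ⟨A, hA, hEA⟩ := hρτ₂ E₁ hE₁ρ
    rcases mem_part.1 hA with hAB | ⟨i, ⟨_, hi2⟩, rfl⟩
    · rcases Finset.mem_insert.1 hAB with rfl | hAB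
      · exfalso
        have : (3:ℕ) ∈ ({1,2,4} : Finset ℕ) := hEA h3E₁
        simp at this
      · rw [Finset.mem_singleton] at hAB; subst hAB
        exact Finset.Subset.antisymm hEA hE₁
    · exfalso
      have : (3:ℕ) ∈ ({i} : Finset ℕ) := hEA h3E₁
      rw [Finset.mem_singleton] at this
      subst this
      rw [hbiu2] at hi2
      omega
  have hE₂24 : E₂ = {2,4} := by
    have hs1 : E₂ ⊆ {2,3,4} := hsub₁ E₂ hE₂ρ h2E₂
    obtain ⟨A, hA, hEA⟩ := hρτ₂ E₂ hE₂ρ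
    have hs2 : E₂ ⊆ ({1,2,4} : Finset ℕ) := by
      rcases mem_part.1 hA with hAB | ⟨i, ⟨_, hi2⟩, rfl⟩
      · rcases Finset.mem_insert.1 hAB with rfl | hAB
        · exact hEA
        · exfalso
          rw [Finset.mem_singleton] at hAB; subst hAB
          have : (4:ℕ) ∈ ({2,3} : Finset ℕ) := hEA h4E₂
          simp at this
      · exfalso
        have : (4:ℕ) ∈ ({i} : Finset ℕ) := hEA h4E₂
        rw [Finset.mem_singleton] at this
        subst this
        rw [hbiu2] at hi2
        omega
    apply Finset.Subset.antisymm
    · intro x hx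
      have h1 := hs1 hx
      have h2 := hs2 hx
      simp only [Finset.mem_insert, Finset.mem_singleton] at h1 h2 ⊢
      omega
    · intro x hx
      simp only [Finset.mem_insert, Finset.mem_singleton] at hx
      rcases hx with rfl | rfl
      · exact h2E₂
      · exact h4E₂
  have hne : E₁ ≠ E₂ := by
    rw [hE₁23, hE₂24]
    intro h
    have : (3:ℕ) ∈ ({2,4} : Finset ℕ) := h ▸ (by simp : (3:ℕ) ∈ ({2,3} : Finset ℕ))
    simp at this
  have := (hρ.2.2 E₁ hE₁ρ E₂ hE₂ρ hne).2
  rw [hE₁23, hE₂24] at this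
  exact not_nd this
end
end
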